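/- arXiv:2502.17190 — 10 statements merged into one kernel-verified Lean document; each statement's English description precedes it below -/
import Mathlib

section
/- Let S be a preordered abelian monoid and let y ∈ S. Then I(y) := {z ∈ S : y + z ≤ y} is an ideal of S contained in the ideal ⟨y⟩ generated by y. If moreover y ≠ 0, then: (1) y is infinite if and only if I(y) ≠ {0}; (2) y is properly infinite if and only if I(y) = ⟨y⟩ and I(y) ≠ {0}; (3) for all x ∈ S and all a, a' ∈ I(y), if x + y + a ≤ y + a' then x ∈ I(y) (this expresses that the image of y in the quotient S/I(y) is finite). -/
namespace PreorderedMonoid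

variable {S : Type*} [AddCommMonoid S] [Preorder S]

/-- The paper's `I(y)`. -/
def absorbedBy (y : S) : Set S := {z | y + z ≤ y}

/-- The paper's `⟨y⟩`. -/
def principalIdeal (y : S) : Set S := {x | ∃ n : ℕ, x ≤ n • y}

theorem zero_mem_absorbedBy (y : S) : (0 : S) ∈ absorbedBy y := by
  simp [absorbedBy]

theorem exists_ne_zero_mem_absorbedBy_iff (y : S) :
    (∃ z, z ≠ 0 ∧ z ∈ absorbedBy y) ↔ absorbedBy y ≠ {0} := by
  have h0 := zero_mem_absorbedBy y
  rw [← Set.nontrivial_iff_ne_singleton h0, Set.nontrivial_iff_exists_ne h0]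
  exact ⟨fun ⟨z, hz0, hz⟩ => ⟨z, hz, hz0⟩, fun ⟨z, hz, hz0⟩ => ⟨z, hz0, hz⟩⟩

variable [IsOrderedAddMonoid S]

theorem add_mem_absorbedBy {y a b : S} (ha : a ∈ absorbedBy y) (hb : b ∈ absorbedBy y) :
    a + b ∈ absorbedBy y :=
  calc y + (a + b) = y + a + b := (add_assoc y a b).symm
    _ ≤ y + b := add_le_add_left ha b
    _ ≤ y := hb

theorem mem_absorbedBy_of_le {y a b : S} (hab : a ≤ b) (hb : b ∈ absorbedBy y) :
    a ∈ absorbedBy y :=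
  (add_le_add_right hab y).trans hb

theorem nsmul_mem_absorbedBy {y a : S} (ha : a ∈ absorbedBy y) (n : ℕ) :
    n • a ∈ absorbedBy y := by
  induction n with
  | zero => simpa using zero_mem_absorbedBy y
  | succ n ih => simpa only [succ_nsmul] using add_mem_absorbedBy ih ha

theorem absorbedBy_subset_principalIdeal {y : S} (hy : 0 ≤ y) :
    absorbedBy y ⊆ principalIdeal y :=
  fun z hz => ⟨1, by simpa using (le_add_of_nonneg_left hy).trans hz⟩

theorem absorbedBy_eq_principalIdeal {y : S} (hy₀ : 0 ≤ y) (hy : y ∈ absorbedBy y) :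
    absorbedBy y = principalIdeal y :=
  (absorbedBy_subset_principalIdeal hy₀).antisymm
    fun _ ⟨n, hn⟩ => mem_absorbedBy_of_le hn (nsmul_mem_absorbedBy hy n)

theorem add_self_le_iff_absorbedBy_eq_principalIdeal {y : S} (hy₀ : 0 ≤ y) (hy : y ≠ 0) :
    y + y ≤ y ↔ absorbedBy y = principalIdeal y ∧ absorbedBy y ≠ {0} := by
  refine ⟨fun hyy => ⟨absorbedBy_eq_principalIdeal hy₀ hyy, fun h => hy ?_⟩, fun ⟨h, _⟩ => ?_⟩
  · have hmem : y ∈ absorbedBy y := hyy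
    rwa [h, Set.mem_singleton_iff] at hmem
  · change y ∈ absorbedBy y
    rw [h]
    exact ⟨1, by simp⟩

/-- The image of `y` in `S / I(y)` is finite. -/
theorem mem_absorbedBy_of_add_le {x y a a' : S} (ha : 0 ≤ a) (ha' : a' ∈ absorbedBy y)
    (h : x + y + a ≤ y + a') : x ∈ absorbedBy y :=
  calc y + x = x + y := add_comm y x
    _ ≤ x + y + a := le_add_of_nonneg_right ha
    _ ≤ y + a' := h
    _ ≤ y := ha'

end PreorderedMonoid

open PreorderedMonoid in
/-- Lemma 2.? : `I(y) := {z | y + z ≤ y}` is an ideal contained in `⟨y⟩`, and for `y ≠ 0`: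
`y` is infinite iff `I(y) ≠ {0}`; `y` is properly infinite iff `I(y) = ⟨y⟩ ≠ {0}`;
and the image of `y` in `S/I(y)` is finite. -/
theorem stmt0 {S : Type*} [AddCommMonoid S] [Preorder S]
    (hzero : ∀ x : S, 0 ≤ x)
    (hadd : ∀ x y z : S, x ≤ y → x + z ≤ y + z)
    (y : S) :
    ((0 : S) ∈ {z : S | y + z ≤ y} ∧
     (∀ a b : S, a ∈ {z : S | y + z ≤ y} → b ∈ {z : S | y + z ≤ y} →
        a + b ∈ {z : S | y + z ≤ y}) ∧
     (∀ a b : S, a ≤ b → b ∈ {z : S | y + z ≤ y} → a ∈ {z : S | y + z ≤ y}) ∧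
     {z : S | y + z ≤ y} ⊆ {x : S | ∃ n : ℕ, x ≤ n • y}) ∧
    (y ≠ 0 →
      (((∃ z : S, z ≠ 0 ∧ y + z ≤ y) ↔ {z : S | y + z ≤ y} ≠ {0}) ∧
       ((y + y ≤ y) ↔
          ({z : S | y + z ≤ y} = {x : S | ∃ n : ℕ, x ≤ n • y} ∧
           {z : S | y + z ≤ y} ≠ {0})) ∧
       (∀ x a a' : S, a ∈ {z : S | y + z ≤ y} → a' ∈ {z : S | y + z ≤ y} →
          x + y + a ≤ y + a' → x ∈ {z : S | y + z ≤ y}))) := by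
  have : IsOrderedAddMonoid S := { add_le_add_left := fun a b h c => hadd a b c h }
  exact ⟨⟨zero_mem_absorbedBy y, fun _ _ => add_mem_absorbedBy, fun _ _ => mem_absorbedBy_of_le,
      absorbedBy_subset_principalIdeal (hzero y)⟩,
    fun hy => ⟨exists_ne_zero_mem_absorbedBy_iff y,
      add_self_le_iff_absorbedBy_eq_principalIdeal (hzero y) hy,
      fun _ a _ _ ha' => mem_absorbedBy_of_add_le (hzero a) ha'⟩⟩
end

section
/- In a simple preordered abelian monoid S, every element is either finite or properly infinite; that is, every infinite element of S is properly infinite. -/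
theorem add_nsmul_le_of_add_le {S : Type*} [AddCommMonoid S] [Preorder S]
    (hadd : ∀ x y z : S, x ≤ y → x + z ≤ y + z) {x z : S} (h : x + z ≤ x) :
    ∀ n : ℕ, x + n • z ≤ x
  | 0 => by rw [zero_nsmul, add_zero]
  | n + 1 =>
    calc x + (n + 1) • z = (x + n • z) + z := by rw [succ_nsmul, add_assoc]
      _ ≤ x + z := hadd _ _ _ (add_nsmul_le_of_add_le hadd h n)
      _ ≤ x := h

theorem stmt1_general {S : Type*} [AddCommMonoid S] [Preorder S]
    (hadd : ∀ x y z : S, x ≤ y → x + z ≤ y + z)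
    (hsimple : ∀ x y : S, y ≠ 0 → ∃ n : ℕ, x ≤ n • y)
    (x : S) (z : S) (hz : z ≠ 0) (hinf : x + z ≤ x) :
    x + x ≤ x := by
  obtain ⟨n, hn⟩ := hsimple x z hz
  calc x + x ≤ n • z + x := hadd _ _ _ hn
    _ = x + n • z := add_comm _ _
    _ ≤ x := add_nsmul_le_of_add_le hadd hinf n

/-- In a simple preordered abelian monoid, every infinite element is properly infinite;
hence every element is either finite or properly infinite. -/
theorem stmt1 {S : Type*} [AddCommMonoid S] [Preorder S]
    (hzero : ∀ x : S, 0 ≤ x)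
    (hadd : ∀ x y z : S, x ≤ y → x + z ≤ y + z)
    (hsimple : ∀ x y : S, y ≠ 0 → ∃ n : ℕ, x ≤ n • y)
    (x : S) (hx : x ≠ 0) (z : S) (hz : z ≠ 0) (hinf : x + z ≤ x) :
    x + x ≤ x :=
  stmt1_general hadd hsimple x z hz hinf
end

section
/- Let S be a conical preordered abelian monoid. An element x ∈ S is paradoxical if and only if there exists an integer n ≥ 1 such that n·x is properly infinite. -/
/-! If `(n + 1) • x ≤ n • x`, adding `x` repeatedly gives `(n + k) • x ≤ n • x` for every `k`,
and `k = n` says that `n • x` is properly infinite. Conversely, `2 • (n • x) ≤ n • x` and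
`(n + 1) • x ≤ (n + n) • x` show that `x` is paradoxical. Conicality is what keeps `n • x`
nonzero. -/

section PreorderedMonoid

variable {S : Type*} [AddCommMonoid S] [Preorder S]

theorem nsmul_le_nsmul_of_le (hzero : ∀ x : S, 0 ≤ x)
    (hadd : ∀ x y z : S, x ≤ y → x + z ≤ y + z) (x : S) {k m : ℕ} (hkm : k ≤ m) :
    k • x ≤ m • x := by
  obtain ⟨d, rfl⟩ := Nat.exists_eq_add_of_le hkm
  simpa [add_nsmul, add_comm] using hadd 0 (d • x) (k • x) (hzero _)

theorem add_nsmul_le_of_succ_nsmul_le (hadd : ∀ x y z : S, x ≤ y → x + z ≤ y + z)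
    {x : S} {n : ℕ} (hle : (n + 1) • x ≤ n • x) (k : ℕ) : (n + k) • x ≤ n • x := by
  induction k with
  | zero => simp
  | succ k ih =>
    calc (n + (k + 1)) • x = (n + 1) • x + k • x := by rw [← add_nsmul, add_right_comm, add_assoc]
      _ ≤ n • x + k • x := hadd _ _ _ hle
      _ = (n + k) • x := (add_nsmul x n k).symm
      _ ≤ n • x := ih

theorem nsmul_ne_zero_of_conical (hzero : ∀ x : S, 0 ≤ x)
    (hadd : ∀ x y z : S, x ≤ y → x + z ≤ y + z) (hconical : ∀ x : S, x ≤ 0 → x = 0)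
    {x : S} (hx : x ≠ 0) {n : ℕ} (hn : 1 ≤ n) : n • x ≠ 0 := fun h =>
  hx <| hconical x <| by simpa [h] using nsmul_le_nsmul_of_le hzero hadd x hn

end PreorderedMonoid

/-- In a conical preordered abelian monoid, an element `x` is paradoxical if and only if
`n • x` is properly infinite for some `n ≥ 1`. -/
theorem stmt3 {S : Type*} [AddCommMonoid S] [Preorder S]
    (hzero : ∀ x : S, 0 ≤ x)
    (hadd : ∀ x y z : S, x ≤ y → x + z ≤ y + z)
    (hconical : ∀ x : S, x ≤ 0 → x = 0)
    (x : S) :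
    (x ≠ 0 ∧ ∃ n : ℕ, 1 ≤ n ∧ (n + 1) • x ≤ n • x) ↔
      (∃ n : ℕ, 1 ≤ n ∧ n • x ≠ 0 ∧ n • x + n • x ≤ n • x) := by
  constructor
  · rintro ⟨hx, n, hn, hle⟩
    refine ⟨n, hn, nsmul_ne_zero_of_conical hzero hadd hconical hx hn, ?_⟩
    rw [← add_nsmul]
    exact add_nsmul_le_of_succ_nsmul_le hadd hle n
  · rintro ⟨n, hn, hne, hle⟩
    refine ⟨fun h => hne (by simp [h]), n, hn, ?_⟩
    calc (n + 1) • x ≤ (n + n) • x := nsmul_le_nsmul_of_le hzero hadd x (by omega)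
      _ = n • x + n • x := add_nsmul x n n
      _ ≤ n • x := hle
end

section
/- Let S be a preordered abelian monoid and y ∈ S with y ≠ 0. Then y is paradoxical if and only if ⟨y⟩ = {x ∈ S : x <_s y}. -/
/-!
If `(n + 1) • y ≤ n • y`, the multiples `m • y` stop growing from `m = n` on, so any `x ≤ m • y`
satisfies `(n + 1) • x ≤ ((n + 1) * (m + 1)) • y ≤ n • y`. Conversely, stable domination
`(k + 1) • x ≤ k • y` already gives `x ≤ k • y` since `0 ≤ k • x`, and `y ∈ ⟨y⟩` is then
stably dominated by `y`, i.e. paradoxical.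
-/

section StableDomination

variable {S : Type*} [AddCommMonoid S] [Preorder S] [AddLeftMono S]

theorem nsmul_le_of_succ_nsmul_le {y : S} {n : ℕ} (h : (n + 1) • y ≤ n • y) :
    ∀ {m : ℕ}, n ≤ m → m • y ≤ n • y := by
  intro m hm
  obtain ⟨k, rfl⟩ := Nat.exists_eq_add_of_le hm
  induction k with
  | zero => rfl
  | succ k ih =>
    calc (n + (k + 1)) • y = (n + 1) • y + k • y := by rw [← add_nsmul]; ring_nf
      _ ≤ n • y + k • y := add_le_add_left h _
      _ = (n + k) • y := (add_nsmul y n k).symm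
      _ ≤ n • y := ih (Nat.le_add_right n k)

theorem succ_nsmul_le_of_le_nsmul {x y : S} {n m : ℕ} (hy : 0 ≤ y)
    (h : (n + 1) • y ≤ n • y) (hx : x ≤ m • y) : (n + 1) • x ≤ n • y := by
  have hx' : x ≤ (m + 1) • y := hx.trans <| by
    rw [succ_nsmul]; exact le_add_of_nonneg_right hy
  calc (n + 1) • x ≤ (n + 1) • ((m + 1) • y) := nsmul_le_nsmul_right hx' _
    _ = ((n + 1) * (m + 1)) • y := (mul_nsmul' y _ _).symm
    _ ≤ n • y := nsmul_le_of_succ_nsmul_le h (by nlinarith)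

theorem le_nsmul_of_succ_nsmul_le {x y : S} {k : ℕ} (hx : 0 ≤ k • x)
    (h : (k + 1) • x ≤ k • y) : x ≤ k • y :=
  (le_add_of_nonneg_left hx).trans (succ_nsmul x k ▸ h)

end StableDomination

theorem stmt4_general {S : Type*} [AddCommMonoid S] [Preorder S]
    (hzero : ∀ x : S, 0 ≤ x)
    (hadd : ∀ x y z : S, x ≤ y → x + z ≤ y + z)
    (y : S) :
    (∃ n : ℕ, 1 ≤ n ∧ (n + 1) • y ≤ n • y) ↔
      {x : S | ∃ n : ℕ, x ≤ n • y} =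
        {x : S | ∃ n : ℕ, 1 ≤ n ∧ (n + 1) • x ≤ n • y} := by
  have : AddLeftMono S := ⟨fun z x₁ x₂ h => by simpa only [add_comm z] using hadd x₁ x₂ z h⟩
  constructor
  · rintro ⟨n, hn, hy⟩
    ext x
    exact ⟨fun ⟨m, hm⟩ => ⟨n, hn, succ_nsmul_le_of_le_nsmul (hzero y) hy hm⟩,
      fun ⟨k, _, hk⟩ => ⟨k, le_nsmul_of_succ_nsmul_le (hzero _) hk⟩⟩
  · intro h
    have hy : y ∈ {x : S | ∃ n : ℕ, x ≤ n • y} := ⟨1, (one_nsmul y).ge⟩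
    rwa [h] at hy

/-- A nonzero element `y` of a preordered abelian monoid is paradoxical if and only if
`⟨y⟩ = {x | x <ₛ y}`, where `x <ₛ y` means `(n+1) • x ≤ n • y` for some `n ≥ 1`. -/
theorem stmt4 {S : Type*} [AddCommMonoid S] [Preorder S]
    (hzero : ∀ x : S, 0 ≤ x)
    (hadd : ∀ x y z : S, x ≤ y → x + z ≤ y + z)
    (y : S) (hy : y ≠ 0) :
    (∃ n : ℕ, 1 ≤ n ∧ (n + 1) • y ≤ n • y) ↔
      {x : S | ∃ n : ℕ, x ≤ n • y} =
        {x : S | ∃ n : ℕ, 1 ≤ n ∧ (n + 1) • x ≤ n • y} :=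
  stmt4_general hzero hadd y
end

section
/- Let S be a preordered abelian monoid with S ≠ {0}. If S has plain paradoxes, then either S admits a nontrivial state or S is purely infinite. Conversely, if S is simple and either S admits a nontrivial state (such a state is necessarily faithful and finite) or S is purely infinite, then S has plain paradoxes. -/
open scoped ENNReal

/-!
If `x` is not paradoxical, a state normalised at `x` comes from the M. Riesz extension theorem.
Consider real formal combinations of the elements of the order ideal generated by `x`, and the
cone of those that are stably nonnegative in `S`. It contains `b - a` whenever `a ≤ b` and both
signs of `(a + b) - a - b`, it absorbs every vector after adding a large multiple of `x`, and it
contains no negative multiple of `x`: such a certificate yields `z + x ≤ z` with `z ≤ N • x`,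
hence `(N + 1) • x ≤ N • x`. A functional that is nonnegative on the cone and equals `1` at `x` is
additive and monotone on the order ideal, and extending it by `∞` gives the state.

Conversely, in a simple monoid a state with a value in `(0, ∞)` is faithful and finite, which rules
out `(n + 1) • x ≤ n • x` for `x ≠ 0`.
-/

/-- A state on a preordered abelian monoid. -/
def IsState {S : Type*} [AddCommMonoid S] [Preorder S] (ν : S → ℝ≥0∞) : Prop :=
  ν 0 = 0 ∧ (∀ a b : S, ν (a + b) = ν a + ν b) ∧ ∀ a b : S, a ≤ b → ν a ≤ ν b

section States

variable {S : Type*} [AddCommMonoid S] [Preorder S] {ν : S → ℝ≥0∞}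

theorem IsState.map_nsmul (hν : IsState ν) (n : ℕ) (a : S) : ν (n • a) = n * ν a := by
  induction n with
  | zero => simp [hν.1]
  | succ n ih => rw [succ_nsmul, hν.2.1, ih, Nat.cast_succ, add_one_mul]

theorem IsState.ne_zero_of_le_nsmul (hν : IsState ν) {x y : S} {m : ℕ} (hy : ν y ≠ 0)
    (h : y ≤ m • x) : ν x ≠ 0 := by
  intro hx
  have := hν.2.2 _ _ h
  rw [hν.map_nsmul, hx, mul_zero] at this
  exact hy (nonpos_iff_eq_zero.1 this)

theorem IsState.ne_top_of_le_nsmul (hν : IsState ν) {x y : S} {k : ℕ} (hy : ν y ≠ ∞)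
    (h : x ≤ k • y) : ν x ≠ ∞ :=
  ne_top_of_le_ne_top (ENNReal.mul_ne_top (ENNReal.natCast_ne_top k) hy)
    (hν.map_nsmul k y ▸ hν.2.2 _ _ h)

theorem IsState.not_succ_nsmul_le (hν : IsState ν) {x : S} (h0 : ν x ≠ 0) (htop : ν x ≠ ∞)
    (n : ℕ) : ¬(n + 1) • x ≤ n • x := by
  intro h
  have := hν.2.2 _ _ h
  rw [hν.map_nsmul, hν.map_nsmul, Nat.cast_succ, add_one_mul, ← add_zero (n * ν x), add_assoc,
    zero_add, ENNReal.add_le_add_iff_left (ENNReal.mul_ne_top (ENNReal.natCast_ne_top n) htop)]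
    at this
  exact h0 (nonpos_iff_eq_zero.1 this)

theorem add_le_self_of_simple (hsimple : ∀ x y : S, y ≠ 0 → ∃ n : ℕ, x ≤ n • y)
    (h : (∃ ν : S → ℝ≥0∞, IsState ν ∧ ∃ y, ν y ≠ 0 ∧ ν y ≠ ∞) ∨ ∀ x : S, x ≠ 0 → x + x ≤ x)
    {x : S} {n : ℕ} (hpar : (n + 1) • x ≤ n • x) : x + x ≤ x := by
  obtain rfl | hx := eq_or_ne x 0
  · exact (add_zero 0).le
  rcases h with ⟨ν, hν, y, hy0, hytop⟩ | hpi
  · have hy : y ≠ 0 := by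
      rintro rfl
      exact hy0 hν.1
    obtain ⟨m, hm⟩ := hsimple y x hx
    obtain ⟨k, hk⟩ := hsimple x y hy
    exact absurd hpar <|
      hν.not_succ_nsmul_le (hν.ne_zero_of_le_nsmul hy0 hm) (hν.ne_top_of_le_nsmul hytop hk) n
  · exact hpi x hx

open Classical in
theorem isState_extend_by_top [AddLeftMono S] (h0 : ∀ a : S, 0 ≤ a) {T : AddSubmonoid S}
    (hT : ∀ a b, a ≤ b → b ∈ T → a ∈ T) (φ : T →+ ℝ) (hφ : Monotone φ) :
    IsState fun a ↦ if h : a ∈ T then ENNReal.ofReal (φ ⟨a, h⟩) else ∞ := by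
  have hφ0 (a : T) : 0 ≤ φ a := φ.map_zero ▸ hφ (h0 (a : S))
  have hmem {a b : S} (h : a + b ∈ T) : a ∈ T ∧ b ∈ T :=
    ⟨hT _ _ (le_add_of_nonneg_right (h0 b)) h, hT _ _ (le_add_of_nonneg_left (h0 a)) h⟩
  refine ⟨?_, fun a b ↦ ?_, fun a b hab ↦ ?_⟩
  · simp only [dif_pos T.zero_mem]
    exact ENNReal.ofReal_eq_zero.2 φ.map_zero.le
  · by_cases hab : a + b ∈ T
    · obtain ⟨ha, hb⟩ := hmem hab
      simp only [dif_pos hab, dif_pos ha, dif_pos hb]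
      rw [← ENNReal.ofReal_add (hφ0 _) (hφ0 _), ← map_add]
      rfl
    · have : a ∉ T ∨ b ∉ T := by
        by_contra! h
        exact hab (T.add_mem h.1 h.2)
      rcases this with ha | hb <;> simp [*]
  · by_cases hb : b ∈ T
    · have ha := hT a b hab hb
      simp only [dif_pos hb, dif_pos ha]
      exact ENNReal.ofReal_le_ofReal (hφ (show (⟨a, ha⟩ : T) ≤ ⟨b, hb⟩ from hab))
    · simp [hb]

end States

section OrderIdeal

variable {S : Type*} [AddCommMonoid S] [Preorder S] [AddLeftMono S]

def orderIdeal (x : S) : AddSubmonoid S where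
  carrier := {y | ∃ n : ℕ, y ≤ n • x}
  zero_mem' := ⟨0, (zero_nsmul x).ge⟩
  add_mem' := by
    rintro a b ⟨m, hm⟩ ⟨n, hn⟩
    exact ⟨m + n, add_nsmul x m n ▸ add_le_add hm hn⟩

namespace orderIdeal

variable {x : S}

theorem mem_of_le {a b : S} (hab : a ≤ b) (hb : b ∈ orderIdeal x) : a ∈ orderIdeal x :=
  let ⟨n, hn⟩ := hb
  ⟨n, hab.trans hn⟩

variable (x) in
def generator : orderIdeal x := ⟨x, 1, (one_nsmul x).ge⟩

end orderIdeal

end OrderIdeal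

section StablyNonneg

variable {S : Type*} [AddCommMonoid S] [Preorder S] [AddLeftMono S] {x : S}

open Finsupp orderIdeal

/-- Read `v` as the formal combination `∑ v a • a`. The certificates `P - Q` are integral
lower approximations of multiples of `v + ε • x` whose positive part dominates its negative part
in `S`; the slack `ε • x` is what makes this a cone over `ℝ` rather than over `ℚ`. -/
def IsStablyNonneg (v : orderIdeal x →₀ ℝ) : Prop :=
  ∀ ε > 0, ∃ n : ℕ, 0 < n ∧ ∃ P Q : orderIdeal x →₀ ℕ,
    ((linearCombination ℕ id Q : orderIdeal x) : S) ≤ linearCombination ℕ id P ∧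
      ∀ a, (P a : ℝ) - Q a ≤ n * (v a + ε * single (generator x) 1 a)

theorem single_generator_apply_nonneg (a : orderIdeal x) :
    (0 : ℝ) ≤ single (generator x) 1 a :=
  le_def.1 (single_nonneg.2 zero_le_one) a

theorem isStablyNonneg_mapRange_sub {P Q : orderIdeal x →₀ ℕ}
    (h : ((linearCombination ℕ id Q : orderIdeal x) : S) ≤ linearCombination ℕ id P) :
    IsStablyNonneg (P.mapRange (↑) Nat.cast_zero - Q.mapRange ((↑) : ℕ → ℝ) Nat.cast_zero) :=
  fun ε hε ↦ ⟨1, one_pos, P, Q, h, fun a ↦ by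
    have := mul_nonneg hε.le (single_generator_apply_nonneg a)
    simp only [coe_sub, Pi.sub_apply, mapRange_apply, Nat.cast_one, one_mul]
    linarith⟩

theorem isStablyNonneg_zero : IsStablyNonneg (0 : orderIdeal x →₀ ℝ) := by
  simpa using isStablyNonneg_mapRange_sub (x := x) (P := 0) (Q := 0) le_rfl

theorem IsStablyNonneg.mono {v w : orderIdeal x →₀ ℝ} (hv : IsStablyNonneg v) (hvw : v ≤ w) :
    IsStablyNonneg w := by
  intro ε hε
  obtain ⟨n, hn, P, Q, hPQ, hcoord⟩ := hv ε hε
  refine ⟨n, hn, P, Q, hPQ, fun a ↦ (hcoord a).trans ?_⟩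
  gcongr
  exact hvw a

theorem IsStablyNonneg.add {v w : orderIdeal x →₀ ℝ} (hv : IsStablyNonneg v)
    (hw : IsStablyNonneg w) : IsStablyNonneg (v + w) := by
  intro ε hε
  obtain ⟨n, hn, P, Q, hPQ, hcoord⟩ := hv (ε / 2) (by positivity)
  obtain ⟨m, hm, P', Q', hPQ', hcoord'⟩ := hw (ε / 2) (by positivity)
  refine ⟨n * m, by positivity, m • P + n • P', m • Q + n • Q', ?_, fun a ↦ ?_⟩
  · simp only [map_add, map_nsmul, AddSubmonoid.coe_add, AddSubmonoidClass.coe_nsmul]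
    exact add_le_add (nsmul_le_nsmul_right hPQ m) (nsmul_le_nsmul_right hPQ' n)
  · have h := mul_le_mul_of_nonneg_left (hcoord a) (Nat.cast_nonneg (α := ℝ) m)
    have h' := mul_le_mul_of_nonneg_left (hcoord' a) (Nat.cast_nonneg (α := ℝ) n)
    simp only [coe_add, coe_smul, Pi.add_apply, Pi.smul_apply, smul_eq_mul, Nat.cast_add,
      Nat.cast_mul]
    linarith

/-- Scale a certificate for `v` by `N * t / n`, rounded down on `P` and up on `Q`: the slack
`ε • x` pays both for the rounding and for the extra `K • x ≥ ∑ P` that restores `∑ Q ≤ ∑ P`. -/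
theorem IsStablyNonneg.smul {v : orderIdeal x →₀ ℝ} (hv : IsStablyNonneg v) {t : ℝ} (ht : 0 < t) :
    IsStablyNonneg (t • v) := by
  intro ε hε
  obtain ⟨n, hn, P, Q, hPQ, hcoord⟩ := hv (ε / (2 * t)) (by positivity)
  obtain ⟨K, hK⟩ := (linearCombination ℕ id P).2
  obtain ⟨N, hN⟩ := exists_nat_gt (2 * K / ε)
  have hNpos : (0 : ℝ) < N := (by positivity : (0 : ℝ) ≤ 2 * K / ε).trans_lt hN
  have hKN : (K : ℝ) ≤ N * ε / 2 := by
    rw [div_lt_iff₀ hε] at hN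
    linarith
  set s := N * t / n with hs
  have hs0 : 0 ≤ s := by positivity
  set k := ⌊s⌋₊
  have hks : (k : ℝ) ≤ s := Nat.floor_le hs0
  have hsk : s ≤ k + 1 := (Nat.lt_floor_add_one s).le
  refine ⟨N, Nat.cast_pos.1 hNpos, k • P + single (generator x) K, (k + 1) • Q, ?_, fun a ↦ ?_⟩
  · calc ((linearCombination ℕ id ((k + 1) • Q) : orderIdeal x) : S)
        = (k + 1) • ((linearCombination ℕ id Q : orderIdeal x) : S) := by simp
      _ ≤ (k + 1) • ((linearCombination ℕ id P : orderIdeal x) : S) :=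
        nsmul_le_nsmul_right hPQ _
      _ ≤ k • ((linearCombination ℕ id P : orderIdeal x) : S) + K • x := by
        rw [succ_nsmul]
        exact add_le_add_right hK _
      _ = linearCombination ℕ id (k • P + single (generator x) K) := by simp [generator]
  · have e0 := single_generator_apply_nonneg a
    have hPa : (0 : ℝ) ≤ P a := Nat.cast_nonneg _
    have hQa : (0 : ℝ) ≤ Q a := Nat.cast_nonneg _
    have hsn : s * n = N * t := by rw [hs]; field_simp
    have hK' : ((single (generator x) K a : ℕ) : ℝ) = K * single (generator x) 1 a := by
      rcases eq_or_ne a (generator x) with rfl | ha <;> simp [*, single_eq_of_ne]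
    simp only [coe_add, coe_smul, Pi.add_apply, Pi.smul_apply, smul_eq_mul, Nat.cast_add,
      Nat.cast_mul, Nat.cast_one, hK']
    calc (k : ℝ) * P a + K * single (generator x) 1 a - (k + 1) * Q a
        ≤ s * (P a - Q a) + K * single (generator x) 1 a := by nlinarith
      _ ≤ s * (n * (v a + ε / (2 * t) * single (generator x) 1 a)) +
          K * single (generator x) 1 a := by gcongr; exact hcoord a
      _ = N * t * v a + (N * ε / 2 + K) * single (generator x) 1 a := by
        rw [← mul_assoc, hsn]; field_simp; ring
      _ ≤ N * (t * v a + ε * single (generator x) 1 a) := by nlinarith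

theorem succ_nsmul_le_nsmul_of_add_le_self (h0 : ∀ a : S, 0 ≤ a) {z : S} {N : ℕ}
    (h : z + x ≤ z) (hz : z ≤ N • x) : (N + 1) • x ≤ N • x := by
  have hiter (j : ℕ) : z + j • x ≤ z := by
    induction j with
    | zero => simp
    | succ j ih =>
      calc z + (j + 1) • x = z + j • x + x := by rw [succ_nsmul, add_assoc]
        _ ≤ z + x := add_le_add_left ih x
        _ ≤ z := h
  calc (N + 1) • x ≤ z + (N + 1) • x := le_add_of_nonneg_left (h0 z)
    _ ≤ z := hiter (N + 1)
    _ ≤ N • x := hz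

theorem IsStablyNonneg.exists_succ_nsmul_le (h0 : ∀ a : S, 0 ≤ a) {t : ℝ} (ht : t < 0)
    (h : IsStablyNonneg (t • single (generator x) 1)) :
    ∃ N : ℕ, 1 ≤ N ∧ (N + 1) • x ≤ N • x := by
  obtain ⟨n, hn, P, Q, hPQ, hcoord⟩ := h (-t / 2) (by linarith)
  have hle : P + single (generator x) 1 ≤ Q := fun a ↦ by
    have hn' : (0 : ℝ) < n := Nat.cast_pos.2 hn
    have := hcoord a
    by_cases ha : a = generator x
    · subst ha
      simp only [coe_smul, Pi.smul_apply, single_eq_same, smul_eq_mul, mul_one] at this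
      have : (P (generator x) : ℝ) < Q (generator x) := by nlinarith
      simpa using this
    · simp only [coe_smul, Pi.smul_apply, single_eq_of_ne ha, smul_eq_mul, mul_zero,
        add_zero] at this
      simpa [single_eq_of_ne ha] using this
  obtain ⟨R, rfl⟩ := exists_add_of_le hle
  set z : S := ((linearCombination ℕ id P : orderIdeal x) : S)
  have hz : z + x ≤ z :=
    calc z + x ≤ z + x + (linearCombination ℕ id R : orderIdeal x) :=
          le_add_of_nonneg_right (h0 _)
      _ = (linearCombination ℕ id (P + single (generator x) 1 + R) : orderIdeal x) := by
        simp [z, generator]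
      _ ≤ z := hPQ
  obtain ⟨K, hK⟩ := (linearCombination ℕ id P).2
  exact ⟨K + 1, by omega, succ_nsmul_le_nsmul_of_add_le_self h0 hz
    (hK.trans (nsmul_le_nsmul_left (h0 x) K.le_succ))⟩

end StablyNonneg

section StateExistence

variable {S : Type*} [AddCommMonoid S] [Preorder S] [AddLeftMono S] {x : S}

open Finsupp orderIdeal

variable (x) in
def stablyNonnegCone : PointedCone ℝ (orderIdeal x →₀ ℝ) where
  carrier := {v | IsStablyNonneg v}
  add_mem' := IsStablyNonneg.add
  zero_mem' := isStablyNonneg_zero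
  smul_mem' c v hv := by
    obtain rfl | hc := eq_or_ne c 0
    · rw [zero_smul]
      exact isStablyNonneg_zero
    · exact NNReal.smul_def c v ▸ hv.smul (NNReal.coe_pos.2 (pos_iff_ne_zero.2 hc))

theorem exists_isStablyNonneg_smul_add (y : orderIdeal x →₀ ℝ) :
    ∃ t : ℝ, IsStablyNonneg (t • single (generator x) 1 + y) := by
  induction y using Finsupp.induction with
  | zero => exact ⟨0, by simpa using isStablyNonneg_zero⟩
  | single_add a r f _ _ ih =>
    obtain ⟨t, ht⟩ := ih
    suffices ∃ u : ℝ, IsStablyNonneg (u • single (generator x) 1 + single a r) by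
      obtain ⟨u, hu⟩ := this
      refine ⟨u + t, ?_⟩
      convert hu.add ht using 1
      rw [add_smul]
      abel
    rcases le_or_gt 0 r with hr | hr
    · exact ⟨0, isStablyNonneg_zero.mono (by simpa using (single_nonneg (i := a)).2 hr)⟩
    · obtain ⟨n, hn⟩ := a.2
      have hcert := isStablyNonneg_mapRange_sub (P := single (generator x) n) (Q := single a 1)
        (by simpa [generator] using hn)
      refine ⟨-r * n, ?_⟩
      convert hcert.smul (neg_pos.2 hr) using 1
      simp only [mapRange_single, smul_sub, smul_single, smul_eq_mul, Nat.cast_one, mul_one]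
      rw [single_neg, sub_neg_eq_add]

theorem exists_monotone_addMonoidHom_eq_one (h0 : ∀ a : S, 0 ≤ a)
    (hx : ∀ n : ℕ, 1 ≤ n → ¬(n + 1) • x ≤ n • x) :
    ∃ φ : orderIdeal x →+ ℝ, Monotone φ ∧ φ (generator x) = 1 := by
  set f : (orderIdeal x →₀ ℝ) →ₗ.[ℝ] ℝ :=
    LinearPMap.mkSpanSingleton (single (generator x) 1) 1 (single_ne_zero.2 one_ne_zero)
  have hf_nonneg (v : f.domain) (hv : (v : orderIdeal x →₀ ℝ) ∈ stablyNonnegCone x) :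
      0 ≤ f v := by
    obtain ⟨v, hv'⟩ := v
    obtain ⟨t, rfl⟩ := Submodule.mem_span_singleton.1 hv'
    rw [LinearPMap.mkSpanSingleton'_apply _ _ _ t, RingHom.id_apply, smul_eq_mul, mul_one]
    by_contra! ht
    obtain ⟨N, hN, hpar⟩ := IsStablyNonneg.exists_succ_nsmul_le h0 ht hv
    exact hx N hN hpar
  have hf_dense (y : orderIdeal x →₀ ℝ) :
      ∃ v : f.domain, (v : orderIdeal x →₀ ℝ) + y ∈ stablyNonnegCone x := by
    obtain ⟨t, ht⟩ := exists_isStablyNonneg_smul_add y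
    exact ⟨⟨t • single (generator x) 1,
      Submodule.smul_mem _ t (Submodule.mem_span_singleton_self _)⟩, ht⟩
  obtain ⟨g, hg, hgC⟩ := riesz_extension (stablyNonnegCone x) f hf_nonneg hf_dense
  have hcert {P Q : orderIdeal x →₀ ℕ}
      (h : ((linearCombination ℕ id Q : orderIdeal x) : S) ≤ linearCombination ℕ id P) :
      g (Q.mapRange (↑) Nat.cast_zero) ≤ g (P.mapRange (↑) Nat.cast_zero) :=
    sub_nonneg.1 (map_sub g _ _ ▸ hgC _ (isStablyNonneg_mapRange_sub h))
  refine ⟨AddMonoidHom.mk' (fun a ↦ g (single a 1)) fun a b ↦ le_antisymm ?_ ?_,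
    fun a b hab ↦ ?_, ?_⟩
  · have := hcert (P := single a 1 + single b 1) (Q := single (a + b) 1) (by simp)
    rw [mapRange_add Nat.cast_add] at this
    simpa using this
  · have := hcert (P := single (a + b) 1) (Q := single a 1 + single b 1) (by simp)
    rw [mapRange_add Nat.cast_add] at this
    simpa using this
  · simpa using hcert (P := single b 1) (Q := single a 1) (by simpa using hab)
  · have := hg ⟨single (generator x) 1, Submodule.mem_span_singleton_self _⟩
    simp only [AddMonoidHom.mk'_apply, this]
    exact LinearPMap.mkSpanSingleton'_apply_self _ _ _ _

end StateExistence

section Dichotomy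

variable {S : Type*} [AddCommMonoid S] [Preorder S]

theorem exists_isState_eq_one [AddLeftMono S] (h0 : ∀ a : S, 0 ≤ a) {x : S}
    (hx : ∀ n : ℕ, 1 ≤ n → ¬(n + 1) • x ≤ n • x) : ∃ ν : S → ℝ≥0∞, IsState ν ∧ ν x = 1 := by
  obtain ⟨φ, hφ, hφx⟩ := exists_monotone_addMonoidHom_eq_one h0 hx
  refine ⟨_, isState_extend_by_top h0 (fun _ _ ↦ orderIdeal.mem_of_le) φ hφ, ?_⟩
  rw [dif_pos (show x ∈ orderIdeal x from (orderIdeal.generator x).2)]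
  exact hφx ▸ ENNReal.ofReal_one

theorem exists_isState_or_add_le_self [AddLeftMono S] (h0 : ∀ a : S, 0 ≤ a)
    (hplain : ∀ (x : S) (n : ℕ), 1 ≤ n → (n + 1) • x ≤ n • x → x + x ≤ x) :
    (∃ ν : S → ℝ≥0∞, IsState ν ∧ ∃ x : S, ν x ≠ 0 ∧ ν x ≠ ∞) ∨
      ∀ x : S, x ≠ 0 → x + x ≤ x := by
  refine or_iff_not_imp_right.2 fun h ↦ ?_
  obtain ⟨x, -, hx⟩ := not_forall₂.1 h
  obtain ⟨ν, hν, hνx⟩ := exists_isState_eq_one h0 fun n hn hpar ↦ hx (hplain x n hn hpar)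
  exact ⟨ν, hν, x, by simp [hνx], by simp [hνx]⟩

end Dichotomy

theorem stmt6_general {S : Type*} [AddCommMonoid S] [Preorder S]
    (hzero : ∀ x : S, 0 ≤ x)
    (hadd : ∀ x y z : S, x ≤ y → x + z ≤ y + z) :
    ((∀ (x : S) (n : ℕ), 1 ≤ n → (n + 1) • x ≤ n • x → x + x ≤ x) →
      (∃ ν : S → ℝ≥0∞, IsState ν ∧ ∃ x : S, ν x ≠ 0 ∧ ν x ≠ ∞) ∨
        (∀ x : S, x ≠ 0 → x + x ≤ x)) ∧
    ((∀ x y : S, y ≠ 0 → ∃ n : ℕ, x ≤ n • y) →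
      ((∃ ν : S → ℝ≥0∞, IsState ν ∧ ∃ x : S, ν x ≠ 0 ∧ ν x ≠ ∞) ∨
        (∀ x : S, x ≠ 0 → x + x ≤ x)) →
      (∀ (x : S) (n : ℕ), 1 ≤ n → (n + 1) • x ≤ n • x → x + x ≤ x)) := by
  have : AddLeftMono S := ⟨fun z x y h ↦ by simpa only [add_comm z] using hadd x y z h⟩
  exact ⟨exists_isState_or_add_le_self hzero,
    fun hsimple h _ _ _ hpar ↦ add_le_self_of_simple hsimple h hpar⟩

/-- If a nonzero preordered abelian monoid has plain paradoxes, then either it admits a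
nontrivial state or it is purely infinite.  Conversely, if it is simple and admits a
nontrivial state or is purely infinite, then it has plain paradoxes. -/
theorem stmt6 {S : Type*} [AddCommMonoid S] [Preorder S]
    (hzero : ∀ x : S, 0 ≤ x)
    (hadd : ∀ x y z : S, x ≤ y → x + z ≤ y + z)
    (hS : ∃ x : S, x ≠ 0) :
    ((∀ (x : S) (n : ℕ), 1 ≤ n → (n + 1) • x ≤ n • x → x + x ≤ x) →
      (∃ ν : S → ℝ≥0∞, IsState ν ∧ ∃ x : S, ν x ≠ 0 ∧ ν x ≠ ∞) ∨
        (∀ x : S, x ≠ 0 → x + x ≤ x)) ∧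
    ((∀ x y : S, y ≠ 0 → ∃ n : ℕ, x ≤ n • y) →
      ((∃ ν : S → ℝ≥0∞, IsState ν ∧ ∃ x : S, ν x ≠ 0 ∧ ν x ≠ ∞) ∨
        (∀ x : S, x ≠ 0 → x + x ≤ x)) →
      (∀ (x : S) (n : ℕ), 1 ≤ n → (n + 1) • x ≤ n • x → x + x ≤ x)) :=
  stmt6_general hzero hadd
end

section
/- Let S be a preordered abelian monoid, let y ∈ S with y ≠ 0 not be paradoxical, let x ∈ ⟨y⟩, and let S₀ ⊆ ⟨y⟩ be a finite subset containing x and y. Then there is a function ν : S₀ → [0,∞) with ν(y) = 1 such that: (a) for all m, n ∈ ℕ and all x₁,…,x_m, y₁,…,y_n ∈ S₀ with x₁ + ⋯ + x_m ≤ y₁ + ⋯ + y_n one has ν(x₁) + ⋯ + ν(x_m) ≤ ν(y₁) + ⋯ + ν(y_n); and (b) ν(x) = inf{(p − q)/k : p, q ∈ ℕ, k ∈ ℕ with k ≥ 1, and q·y + k·x ≤ p·y}. -/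
/-!
The function `ν` is `s ↦ φ (Pi.single s 1)` for a linear functional `φ` on `S → ℝ` that is
nonnegative on a convex cone containing the vectors `b - a`, where `a b : S → ℕ` count elements
of `S₀` with `∑ a s • s ≤ ∑ b s • s`, and that satisfies `φ δ_y = 1`, `φ δ_x = F x` with
`F = gauge y` the infimum in (b). M. Riesz's extension theorem produces `φ` from
`span {δ_x, δ_y}` as soon as `0 ≤ α F x + β` whenever `α δ_x + β δ_y` lies in the cone.
To see this, scale by `T` and round to integers: the cone condition becomes an inequality
`z + c ≤ w + c` in `S` whose catalyst `c ∈ ⟨y⟩` can be cancelled inside the gauge, because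
`z + c ≤ w + c` iterates to `t • z ≤ t • w + N • y` for all `t`. The rounding errors stay
bounded and vanish after dividing by `T`; non-paradoxicality of `y` makes the gauge nonnegative.
-/

open Finset

theorem le_of_forall_nat_mul_le_add {a b C : ℝ} (h : ∀ n : ℕ, n * a ≤ n * b + C) : a ≤ b := by
  by_contra! hba
  obtain ⟨n, hn⟩ := exists_nat_gt (C / (a - b))
  rw [div_lt_iff₀ (sub_pos.2 hba)] at hn
  linarith [h n]

theorem exists_nat_sub_mem_Icc (r : ℝ) : ∃ U V : ℕ, r ≤ U - V ∧ (U : ℝ) - V ≤ r + 1 := by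
  have hsub : ((⌈r⌉.toNat : ℕ) : ℝ) - ((-⌈r⌉).toNat : ℕ) = ⌈r⌉ := by
    exact_mod_cast Int.toNat_sub_toNat_neg ⌈r⌉
  exact ⟨_, _, hsub ▸ Int.le_ceil r, hsub ▸ (Int.ceil_lt_add_one r).le⟩

theorem exists_linearMap_apply_single_pair {ι : Type*} [DecidableEq ι] {i j : ι} {c d : ℝ}
    (h : i = j → c = d) :
    ∃ ℓ : (ι → ℝ) →ₗ[ℝ] ℝ, ∀ α β : ℝ,
      ℓ (α • Pi.single i 1 + β • Pi.single j 1) = α * c + β * d := by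
  by_cases hij : i = j
  · subst hij
    obtain rfl := h rfl
    refine ⟨c • LinearMap.proj i, fun α β => ?_⟩
    simp only [LinearMap.smul_apply, LinearMap.coe_proj, Function.eval, Pi.add_apply,
      Pi.smul_apply, Pi.single_eq_same, smul_eq_mul, mul_one]
    ring
  · exact ⟨c • LinearMap.proj i + d • LinearMap.proj j,
      fun α β => by simp [hij, Ne.symm hij, mul_comm]⟩

namespace PreorderedMonoid

variable {S : Type*} [AddCommMonoid S]

section WeightedSum

variable (S₀ : Finset S)

def weightedSum : (S → ℕ) →+ S where
  toFun a := ∑ s ∈ S₀, a s • s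
  map_zero' := by simp
  map_add' a b := by simp [add_nsmul, sum_add_distrib]

theorem weightedSum_apply (a : S → ℕ) : weightedSum S₀ a = ∑ s ∈ S₀, a s • s := rfl

variable [DecidableEq S]

theorem weightedSum_single {s : S} (hs : s ∈ S₀) (n : ℕ) :
    weightedSum S₀ (Pi.single s n) = n • s := by
  rw [weightedSum_apply, sum_eq_single_of_mem s hs fun t _ hts => by simp [hts]]
  simp

theorem weightedSum_sum_single {ι : Type*} [Fintype ι] {xs : ι → S} (hxs : ∀ i, xs i ∈ S₀) :
    weightedSum S₀ (∑ i, Pi.single (xs i) 1) = ∑ i, xs i := by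
  simp [map_sum, weightedSum_single S₀ (hxs _)]

end WeightedSum

variable [Preorder S]

def StablyLT (x y : S) : Prop := ∃ n : ℕ, 1 ≤ n ∧ (n + 1) • x ≤ n • y

def ratios (y z : S) : Set ℝ :=
  {r : ℝ | ∃ p q k : ℕ, 1 ≤ k ∧ q • y + k • z ≤ p • y ∧ r = ((p : ℝ) - (q : ℝ)) / (k : ℝ)}

noncomputable def gauge (y z : S) : ℝ := sInf (ratios y z)

variable [AddLeftMono S]

theorem nsmul_add_le_nsmul_add {z w c : S} (h : z + c ≤ w + c) (t : ℕ) :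
    t • z + c ≤ t • w + c := by
  induction t with
  | zero => simp
  | succ t ih =>
    calc (t + 1) • z + c = z + (t • z + c) := by rw [succ_nsmul']; abel
      _ ≤ z + (t • w + c) := add_le_add_right ih z
      _ = t • w + (z + c) := by abel
      _ ≤ t • w + (w + c) := add_le_add_right h _
      _ = (t + 1) • w + c := by rw [succ_nsmul']; abel

def ideal (y : S) : AddSubmonoid S where
  carrier := {z | ∃ n : ℕ, z ≤ n • y}
  add_mem' := fun ⟨m, hm⟩ ⟨n, hn⟩ => ⟨m + n, by rw [add_nsmul]; exact add_le_add hm hn⟩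
  zero_mem' := ⟨0, by rw [zero_nsmul]⟩

theorem weightedSum_mono (S₀ : Finset S) (hS : ∀ z : S, 0 ≤ z) {a b : S → ℕ}
    (h : ∀ s ∈ S₀, a s ≤ b s) : weightedSum S₀ a ≤ weightedSum S₀ b :=
  sum_le_sum fun s hs => nsmul_le_nsmul_left (hS s) (h s hs)

theorem weightedSum_mem_ideal {S₀ : Finset S} {y : S} (hS₀ : ∀ s ∈ S₀, s ∈ ideal y)
    (a : S → ℕ) : weightedSum S₀ a ∈ ideal y :=
  sum_mem fun s hs => nsmul_mem (hS₀ s hs) _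

section Gauge

variable {y z w c : S}

theorem le_of_nsmul_le_nsmul (hS : ∀ z : S, 0 ≤ z) (hy : ¬ StablyLT y y) {m n : ℕ}
    (h : m • y ≤ n • y) : m ≤ n := by
  by_contra! hnm
  refine hy ⟨m, by omega, ?_⟩
  calc (m + 1) • y ≤ (m - n + m) • y := nsmul_le_nsmul_left (hS y) (by omega)
    _ = (m - n) • y + m • y := add_nsmul _ _ _
    _ ≤ (m - n) • y + n • y := add_le_add_right h _
    _ = m • y := by rw [← add_nsmul]; congr 1; omega

theorem self_mem_ideal : y ∈ ideal y := ⟨1, (one_nsmul y).ge⟩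

theorem ratios_nonempty (hz : z ∈ ideal y) : (ratios y z).Nonempty :=
  let ⟨n, hn⟩ := hz
  ⟨n, n, 0, 1, le_rfl, by simpa using hn, by simp⟩

theorem nonneg_of_mem_ratios (hS : ∀ z : S, 0 ≤ z) (hy : ¬ StablyLT y y) {r : ℝ}
    (hr : r ∈ ratios y z) : 0 ≤ r := by
  obtain ⟨p, q, k, -, hle, rfl⟩ := hr
  have hqp : q ≤ p := le_of_nsmul_le_nsmul hS hy ((le_add_of_nonneg_right (hS _)).trans hle)
  have : (q : ℝ) ≤ p := by exact_mod_cast hqp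
  exact div_nonneg (by linarith) k.cast_nonneg

theorem bddBelow_ratios (hS : ∀ z : S, 0 ≤ z) (hy : ¬ StablyLT y y) : BddBelow (ratios y z) :=
  ⟨0, fun _ => nonneg_of_mem_ratios hS hy⟩

theorem gauge_nonneg (hS : ∀ z : S, 0 ≤ z) (hy : ¬ StablyLT y y) : 0 ≤ gauge y z :=
  Real.sInf_nonneg fun _ => nonneg_of_mem_ratios hS hy

theorem nsmul_gauge_le (hS : ∀ z : S, 0 ≤ z) (hy : ¬ StablyLT y y) {p q k : ℕ}
    (h : q • y + k • z ≤ p • y) : k * gauge y z ≤ p - q := by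
  rcases Nat.eq_zero_or_pos k with rfl | hk
  · have : q ≤ p := le_of_nsmul_le_nsmul hS hy (by simpa using h)
    have : (q : ℝ) ≤ p := by exact_mod_cast this
    simpa using this
  · have hk' : (0 : ℝ) < k := by exact_mod_cast hk
    rw [mul_comm, ← le_div_iff₀ hk']
    exact csInf_le (bddBelow_ratios hS hy) ⟨p, q, k, hk, h, rfl⟩

theorem le_gauge {r : ℝ} (hz : z ∈ ideal y)
    (h : ∀ p q k : ℕ, 1 ≤ k → q • y + k • z ≤ p • y → k * r ≤ p - q) : r ≤ gauge y z := by
  refine le_csInf (ratios_nonempty hz) ?_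
  rintro _ ⟨p, q, k, hk, hle, rfl⟩
  rw [le_div_iff₀ (by exact_mod_cast hk), mul_comm]
  exact h p q k hk hle

theorem gauge_le_of_le_nsmul (hS : ∀ z : S, 0 ≤ z) (hy : ¬ StablyLT y y) {n : ℕ}
    (h : z ≤ n • y) : gauge y z ≤ n := by
  simpa using nsmul_gauge_le (k := 1) (q := 0) hS hy (by simpa using h)

theorem gauge_add_le (hS : ∀ z : S, 0 ≤ z) (hy : ¬ StablyLT y y) (hz : z ∈ ideal y)
    (hw : w ∈ ideal y) : gauge y (z + w) ≤ gauge y z + gauge y w := by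
  unfold gauge
  rw [← csInf_add (ratios_nonempty hz) (bddBelow_ratios hS hy)
    (ratios_nonempty hw) (bddBelow_ratios hS hy)]
  refine le_csInf ((ratios_nonempty hz).add (ratios_nonempty hw)) ?_
  rintro _ ⟨_, ⟨p, q, k, hk, hle, rfl⟩, _, ⟨p', q', k', hk', hle', rfl⟩, rfl⟩
  have hsum : (k' * q + k * q') • y + (k * k') • (z + w) ≤ (k' * p + k * p') • y :=
    calc (k' * q + k * q') • y + (k * k') • (z + w)
        = k' • (q • y + k • z) + k • (q' • y + k' • w) := by
          simp only [smul_add, mul_nsmul', add_nsmul, smul_comm k k' z]; abel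
      _ ≤ k' • (p • y) + k • (p' • y) :=
          add_le_add (nsmul_le_nsmul_right hle k') (nsmul_le_nsmul_right hle' k)
      _ = (k' * p + k * p') • y := by simp only [mul_nsmul', add_nsmul]
  have hkk : (0 : ℝ) < k * k' := by positivity
  have := nsmul_gauge_le hS hy hsum
  change gauge y (z + w) ≤ ((p : ℝ) - q) / k + ((p' : ℝ) - q') / k'
  rw [div_add_div _ _ (by positivity) (by positivity), le_div_iff₀ hkk]
  push_cast at this
  linarith

theorem gauge_nsmul_le (hS : ∀ z : S, 0 ≤ z) (hy : ¬ StablyLT y y) (hz : z ∈ ideal y) (n : ℕ) :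
    gauge y (n • z) ≤ n * gauge y z := by
  induction n with
  | zero => simpa using gauge_le_of_le_nsmul (n := 0) hS hy (by simp)
  | succ n ih =>
    rw [succ_nsmul]
    push_cast
    linarith [gauge_add_le hS hy (nsmul_mem hz n) hz]

theorem nsmul_gauge_add_le_gauge (hS : ∀ z : S, 0 ≤ z) (hy : ¬ StablyLT y y) (hz : z ∈ ideal y)
    (n m : ℕ) : n * gauge y z + m ≤ gauge y (n • z + m • y) := by
  refine le_gauge (add_mem (nsmul_mem hz n) (nsmul_mem self_mem_ideal m)) fun p q k _ h => ?_
  have h' : (q + k * m) • y + (k * n) • z ≤ p • y := by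
    convert h using 1
    simp only [smul_add, mul_nsmul', add_nsmul]; abel
  have := nsmul_gauge_le hS hy h'
  push_cast at this
  linarith

theorem gauge_self (hS : ∀ z : S, 0 ≤ z) (hy : ¬ StablyLT y y) : gauge y y = 1 := by
  refine le_antisymm (by simpa using gauge_le_of_le_nsmul (n := 1) hS hy (by simp)) ?_
  simpa using nsmul_gauge_add_le_gauge hS hy self_mem_ideal 0 1

theorem gauge_nsmul_add_nsmul_add_le (hS : ∀ z : S, 0 ≤ z) (hy : ¬ StablyLT y y)
    (hz : z ∈ ideal y) (hw : w ∈ ideal y) (n m : ℕ) :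
    gauge y (n • z + m • y + w) ≤ n * gauge y z + m + gauge y w := by
  have hnz := nsmul_mem hz n
  have hmy := nsmul_mem (self_mem_ideal (y := y)) m
  linarith [gauge_add_le hS hy (add_mem hnz hmy) hw, gauge_add_le hS hy hnz hmy,
    gauge_nsmul_le hS hy hz n, gauge_le_of_le_nsmul hS hy (le_refl (m • y))]

theorem gauge_le_gauge_of_add_le_add (hS : ∀ z : S, 0 ≤ z) (hy : ¬ StablyLT y y)
    (hc : c ∈ ideal y) (hw : w ∈ ideal y) (h : z + c ≤ w + c) : gauge y z ≤ gauge y w := by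
  obtain ⟨N, hN⟩ := hc
  refine le_gauge hw fun p q k _ hle => le_of_forall_nat_mul_le_add (C := k * N) fun t => ?_
  have htz : t • z ≤ t • w + N • y :=
    calc t • z ≤ t • z + c := le_add_of_nonneg_right (hS c)
      _ ≤ t • w + c := nsmul_add_le_nsmul_add h t
      _ ≤ t • w + N • y := add_le_add_right hN _
  have hkt : (t * q) • y + (t * k) • z ≤ (t * p + k * N) • y :=
    calc (t * q) • y + (t * k) • z = (t * q) • y + k • (t • z) := by
          rw [mul_nsmul z t k]
      _ ≤ (t * q) • y + k • (t • w + N • y) := add_le_add_right (nsmul_le_nsmul_right htz k) _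
      _ = t • (q • y + k • w) + (k * N) • y := by
          simp only [smul_add, mul_nsmul', smul_comm k t w]; abel
      _ ≤ t • (p • y) + (k * N) • y := add_le_add_left (nsmul_le_nsmul_right hle t) _
      _ = (t * p + k * N) • y := by rw [add_nsmul, mul_nsmul', mul_nsmul']
  have := nsmul_gauge_le hS hy hkt
  push_cast at this
  linarith

end Gauge

section Cone

variable (S₀ : Finset S)

/-- The error `e`, independent of `T`, makes this set closed under multiplication by nonnegative
reals (round `T * c` down) while each multiple `T • v` still carries integral data `a`, `b`. -/
def dominanceCone : PointedCone ℝ (S → ℝ) where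
  carrier := {v | ∃ e : S → ℝ, ∀ T : ℕ, ∃ a b : S → ℕ, weightedSum S₀ a ≤ weightedSum S₀ b ∧
    ∀ s ∈ S₀, (b s : ℝ) - a s ≤ T * v s + e s}
  zero_mem' := ⟨0, fun _ => ⟨0, 0, le_rfl, by simp⟩⟩
  add_mem' := by
    rintro v w ⟨e, he⟩ ⟨e', he'⟩
    refine ⟨e + e', fun T => ?_⟩
    obtain ⟨a, b, hab, h⟩ := he T
    obtain ⟨a', b', hab', h'⟩ := he' T
    refine ⟨a + a', b + b', by simpa only [map_add] using add_le_add hab hab', fun s hs => ?_⟩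
    simp only [Pi.add_apply, Nat.cast_add]
    linarith [h s hs, h' s hs]
  smul_mem' := by
    rintro ⟨c, hc⟩ v ⟨e, he⟩
    refine ⟨fun s => e s + |v s|, fun T => ?_⟩
    obtain ⟨a, b, hab, h⟩ := he ⌊T * c⌋₊
    refine ⟨a, b, hab, fun s hs => ?_⟩
    have h1 : (⌊T * c⌋₊ : ℝ) ≤ T * c := Nat.floor_le (by positivity)
    have h2 : T * c < ⌊T * c⌋₊ + 1 := Nat.lt_floor_add_one _
    have h3 := h s hs
    simp only [Nonneg.mk_smul, Pi.smul_apply, smul_eq_mul]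
    rcases le_total 0 (v s) with hv | hv
    · rw [abs_of_nonneg hv]; nlinarith
    · rw [abs_of_nonpos hv]; nlinarith

theorem mem_dominanceCone_of_le {a b : S → ℕ} {v : S → ℝ}
    (hab : weightedSum S₀ a ≤ weightedSum S₀ b) (h : ∀ s ∈ S₀, (b s : ℝ) - a s ≤ v s) : v ∈ dominanceCone S₀ := by
  refine ⟨0, fun T => ⟨T • a, T • b, by simpa only [map_nsmul] using nsmul_le_nsmul_right hab T,
    fun s hs => ?_⟩⟩
  simp only [Pi.smul_apply, smul_eq_mul, Nat.cast_mul, Pi.zero_apply, add_zero]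
  nlinarith [h s hs, (T.cast_nonneg : (0 : ℝ) ≤ T)]

variable [DecidableEq S]

theorem single_mem_dominanceCone (s : S) : Pi.single s 1 ∈ dominanceCone S₀ :=
  mem_dominanceCone_of_le S₀ (a := 0) (b := 0) le_rfl fun t _ => by
    rcases eq_or_ne t s with rfl | hts <;> simp [*]

theorem sum_le_sum_of_nonneg_on_dominanceCone {φ : (S → ℝ) →ₗ[ℝ] ℝ}
    (hφ : ∀ v ∈ dominanceCone S₀, 0 ≤ φ v) {ι κ : Type*} [Fintype ι] [Fintype κ]
    {xs : ι → S} {ys : κ → S} (hxs : ∀ i, xs i ∈ S₀) (hys : ∀ j, ys j ∈ S₀)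
    (h : ∑ i, xs i ≤ ∑ j, ys j) :
    ∑ i, φ (Pi.single (xs i) 1) ≤ ∑ j, φ (Pi.single (ys j) 1) := by
  have hmem : ∑ j, Pi.single (ys j) (1 : ℝ) - ∑ i, Pi.single (xs i) 1 ∈ dominanceCone S₀ :=
    mem_dominanceCone_of_le S₀ (a := ∑ i, Pi.single (xs i) 1) (b := ∑ j, Pi.single (ys j) 1)
      (by rwa [weightedSum_sum_single S₀ hxs, weightedSum_sum_single S₀ hys])
      fun s _ => by simp [Finset.sum_apply, Pi.single_apply]
  simpa [map_sum] using hφ _ hmem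

theorem exists_nsmul_single_add_mem_dominanceCone {y : S} (hS₀ : ∀ s ∈ S₀, s ∈ ideal y)
    (hy : y ∈ S₀) (v : S → ℝ) : ∃ L : ℕ, (L : ℝ) • Pi.single y 1 + v ∈ dominanceCone S₀ := by
  obtain ⟨L, hL⟩ := weightedSum_mem_ideal hS₀ fun s => ⌈-v s⌉₊
  refine ⟨L, mem_dominanceCone_of_le S₀ (a := fun s => ⌈-v s⌉₊) (b := Pi.single y L)
    (by rwa [weightedSum_single S₀ hy]) fun s _ => ?_⟩
  have := Nat.le_ceil (-v s)
  by_cases hs : s = y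
  · subst hs
    simp only [Pi.single_eq_same, Pi.add_apply, Pi.smul_apply, smul_eq_mul, mul_one]
    linarith
  · simp only [Pi.single_eq_of_ne hs, Pi.add_apply, Pi.smul_apply, smul_eq_mul, mul_zero]
    push_cast
    linarith

theorem nonneg_of_mem_dominanceCone (hS : ∀ z : S, 0 ≤ z) {x y : S} (hy : ¬ StablyLT y y)
    (hS₀ : ∀ s ∈ S₀, s ∈ ideal y) (hx : x ∈ S₀) (hyS₀ : y ∈ S₀) {α β : ℝ}
    (h : α • Pi.single x 1 + β • Pi.single y 1 ∈ dominanceCone S₀) :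
    0 ≤ α * gauge y x + β := by
  obtain ⟨e, he⟩ := h
  let E : S → ℕ := fun s => ⌈e s⌉₊
  refine le_of_forall_nat_mul_le_add (C := gauge y x + 1 + gauge y (weightedSum S₀ E)) fun T => ?_
  obtain ⟨a, b, hab, hba⟩ := he T
  obtain ⟨U, U', hU, hU'⟩ := exists_nat_sub_mem_Icc (T * α)
  obtain ⟨W, W', hW, hW'⟩ := exists_nat_sub_mem_Icc (T * β)
  have hpt : ∀ s ∈ S₀, (b + U' • Pi.single x 1 + W' • Pi.single y 1 : S → ℕ) s ≤
      (a + U • Pi.single x 1 + W • Pi.single y 1 + E : S → ℕ) s := by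
    intro s hs
    have h1 := hba s hs
    have h2 : e s ≤ E s := Nat.le_ceil (e s)
    simp only [Pi.add_apply, Pi.smul_apply, smul_eq_mul, Pi.single_apply] at h1 ⊢
    rify
    split_ifs at h1 ⊢ <;> push_cast at h1 ⊢ <;> linarith
  have hmono := weightedSum_mono S₀ hS hpt
  simp only [map_add, map_nsmul, weightedSum_single S₀ hx, weightedSum_single S₀ hyS₀,
    one_nsmul] at hmono
  have hcat : U' • x + W' • y + weightedSum S₀ a ≤
      U • x + W • y + weightedSum S₀ E + weightedSum S₀ a :=
    calc U' • x + W' • y + weightedSum S₀ a ≤ U' • x + W' • y + weightedSum S₀ b :=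
          add_le_add_right hab _
      _ = weightedSum S₀ b + U' • x + W' • y := by abel
      _ ≤ weightedSum S₀ a + U • x + W • y + weightedSum S₀ E := hmono
      _ = U • x + W • y + weightedSum S₀ E + weightedSum S₀ a := by abel
  have hx' := hS₀ x hx
  have hE := weightedSum_mem_ideal hS₀ E
  have hle := gauge_le_gauge_of_add_le_add hS hy (weightedSum_mem_ideal hS₀ a)
    (add_mem (add_mem (nsmul_mem hx' U) (nsmul_mem self_mem_ideal W)) hE) hcat
  have hlow := nsmul_gauge_add_le_gauge hS hy hx' U' W'
  have hup := gauge_nsmul_add_nsmul_add_le hS hy hx' hE U W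
  have hUx := mul_le_mul_of_nonneg_right hU' (gauge_nonneg hS hy (z := x))
  linarith

theorem exists_linearMap_nonneg_on_dominanceCone (hS : ∀ z : S, 0 ≤ z) {x y : S}
    (hy : ¬ StablyLT y y) (hS₀ : ∀ s ∈ S₀, s ∈ ideal y) (hx : x ∈ S₀) (hyS₀ : y ∈ S₀) :
    ∃ φ : (S → ℝ) →ₗ[ℝ] ℝ, (∀ v ∈ dominanceCone S₀, 0 ≤ φ v) ∧
      φ (Pi.single y 1) = 1 ∧ φ (Pi.single x 1) = gauge y x := by
  obtain ⟨ℓ, hℓ⟩ := exists_linearMap_apply_single_pair (i := x) (j := y) (c := gauge y x) (d := 1)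
    fun h => by subst h; exact gauge_self hS hy
  let M := Submodule.span ℝ ({Pi.single x 1, Pi.single y 1} : Set (S → ℝ))
  have hxM : Pi.single x 1 ∈ M := Submodule.subset_span (by simp)
  have hyM : Pi.single y 1 ∈ M := Submodule.subset_span (by simp)
  obtain ⟨φ, hφM, hφK⟩ := riesz_extension (dominanceCone S₀) (ℓ.toPMap M)
    (fun ⟨m, hm⟩ hmK => by
      obtain ⟨α, β, rfl⟩ := Submodule.mem_span_pair.1 hm
      simpa [hℓ] using nonneg_of_mem_dominanceCone S₀ hS hy hS₀ hx hyS₀ hmK)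
    (fun v => by
      obtain ⟨L, hL⟩ := exists_nsmul_single_add_mem_dominanceCone S₀ hS₀ hyS₀ v
      exact ⟨⟨_, Submodule.smul_mem M _ hyM⟩, hL⟩)
  refine ⟨φ, hφK, ?_, ?_⟩
  · simpa [hφM ⟨_, hyM⟩] using hℓ 0 1
  · simpa [hφM ⟨_, hxM⟩] using hℓ 1 0

end Cone

end PreorderedMonoid

theorem stmt7_general {S : Type*} [AddCommMonoid S] [Preorder S]
    (hzero : ∀ x : S, 0 ≤ x)
    (hadd : ∀ x y z : S, x ≤ y → x + z ≤ y + z)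
    (y : S)
    (hnp : ¬ ∃ n : ℕ, 1 ≤ n ∧ (n + 1) • y ≤ n • y)
    (x : S)
    (S₀ : Finset S)
    (hS₀ : ∀ s ∈ S₀, ∃ n : ℕ, s ≤ n • y)
    (hxS₀ : x ∈ S₀) (hyS₀ : y ∈ S₀) :
    ∃ ν : S → ℝ,
      (∀ s ∈ S₀, 0 ≤ ν s) ∧
      ν y = 1 ∧
      (∀ (m n : ℕ) (xs : Fin m → S) (ys : Fin n → S),
        (∀ i, xs i ∈ S₀) → (∀ j, ys j ∈ S₀) →
        (∑ i, xs i) ≤ (∑ j, ys j) →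
        (∑ i, ν (xs i)) ≤ ∑ j, ν (ys j)) ∧
      ν x = sInf {r : ℝ | ∃ p q k : ℕ, 1 ≤ k ∧
        q • y + k • x ≤ p • y ∧ r = ((p : ℝ) - (q : ℝ)) / (k : ℝ)} := by
  classical
  have : AddLeftMono S := ⟨fun c _ _ h => by simpa only [add_comm c] using hadd _ _ c h⟩
  obtain ⟨φ, hφK, hφy, hφx⟩ :=
    PreorderedMonoid.exists_linearMap_nonneg_on_dominanceCone S₀ hzero hnp hS₀ hxS₀ hyS₀
  refine ⟨fun s => φ (Pi.single s 1),
    fun s _ => hφK _ (PreorderedMonoid.single_mem_dominanceCone S₀ s), hφy,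
    fun _ _ _ _ => PreorderedMonoid.sum_le_sum_of_nonneg_on_dominanceCone S₀ hφK, hφx⟩

/-- The key finite-subset lemma towards Tarski's theorem: if `y ≠ 0` is not paradoxical,
`x ∈ ⟨y⟩` and `S₀ ⊆ ⟨y⟩` is a finite set containing `x` and `y`, then there is a
nonnegative real-valued function `ν` on `S₀` with `ν y = 1` which is subadditive along
inequalities of finite sums, and such that
`ν x = inf {(p - q)/k : q • y + k • x ≤ p • y, k ≥ 1}`. -/
theorem stmt7 {S : Type*} [AddCommMonoid S] [Preorder S]
    (hzero : ∀ x : S, 0 ≤ x)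
    (hadd : ∀ x y z : S, x ≤ y → x + z ≤ y + z)
    (y : S) (hy : y ≠ 0)
    (hnp : ¬ ∃ n : ℕ, 1 ≤ n ∧ (n + 1) • y ≤ n • y)
    (x : S) (hx : ∃ n : ℕ, x ≤ n • y)
    (S₀ : Finset S)
    (hS₀ : ∀ s ∈ S₀, ∃ n : ℕ, s ≤ n • y)
    (hxS₀ : x ∈ S₀) (hyS₀ : y ∈ S₀) :
    ∃ ν : S → ℝ,
      (∀ s ∈ S₀, 0 ≤ ν s) ∧
      ν y = 1 ∧
      (∀ (m n : ℕ) (xs : Fin m → S) (ys : Fin n → S),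
        (∀ i, xs i ∈ S₀) → (∀ j, ys j ∈ S₀) →
        (∑ i, xs i) ≤ (∑ j, ys j) →
        (∑ i, ν (xs i)) ≤ ∑ j, ν (ys j)) ∧
      ν x = sInf {r : ℝ | ∃ p q k : ℕ, 1 ≤ k ∧
        q • y + k • x ≤ p • y ∧ r = ((p : ℝ) - (q : ℝ)) / (k : ℝ)} :=
  stmt7_general hzero hadd y hnp x S₀ hS₀ hxS₀ hyS₀
end

section
/- Let f, g ∈ F(O). Then the pointwise maximum f ∨ g and the pointwise minimum f ∧ g belong to F(O); moreover f ∨ g is a least upper bound of {f, g} in the poset (F(O), ≤) and f ∧ g is a greatest lower bound of {f, g} in (F(O), ≤). Consequently, every finite subset of F(O) has a least upper bound in F(O) and every nonempty finite subset of F(O) has a greatest lower bound in F(O). -/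
open TopologicalSpace

/-- The monoid `F(O)` of finite sums of indicator functions of sets in `O`. -/
def FO {X : Type*} (O : Set (Set X)) : Set (X → ℕ) :=
  {f | ∃ (n : ℕ) (U : Fin n → Set X), (∀ i, U i ∈ O) ∧
    f = ∑ i, Set.indicator (U i) (1 : X → ℕ)}

/-!
A bounded `f : X → ℕ` lies in `F(O)` iff each superlevel set `{f > k}` lies in `O`: then
`f = ∑_{k < N} 1_{f > k}`, and conversely `{∑ᵢ 1_{Uᵢ} > k}` is the union, over the
`(k+1)`-element index sets `S`, of `⋂_{i ∈ S} Uᵢ`. The superlevel sets of `f ⊔ g` and `f ⊓ g`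
are unions and intersections of those of `f` and `g`, so `F(O)` is a sublattice of `X → ℕ`,
and finite suprema and nonempty finite infima in `X → ℕ` stay in it.
-/

open Finset
open scoped Classical

namespace FO

variable {X : Type*} {O : Set (Set X)}

lemma sum_indicator_apply {n : ℕ} (U : Fin n → Set X) (x : X) :
    (∑ i, (U i).indicator (1 : X → ℕ)) x = #{i | x ∈ U i} := by
  simp [Finset.sum_apply, Set.indicator_apply]

lemma exists_le_of_mem {f : X → ℕ} (hf : f ∈ FO O) : ∃ N, ∀ x, f x ≤ N := by
  obtain ⟨n, U, -, rfl⟩ := hf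
  refine ⟨n, fun x => ?_⟩
  rw [sum_indicator_apply]
  exact (card_filter_le _ _).trans_eq (card_fin n)

lemma superlevel_mem (hO_empty : ∅ ∈ O) (hO_sup : SupClosed O) (hO_inf : InfClosed O)
    {f : X → ℕ} (hf : f ∈ FO O) (k : ℕ) : {x | k < f x} ∈ O := by
  obtain ⟨n, U, hU, rfl⟩ := hf
  have hlevel : {x | k < (∑ i, (U i).indicator (1 : X → ℕ)) x}
      = ⋃ S ∈ {S : Finset (Fin n) | #S = k + 1}, ⋂ i ∈ S, U i := by
    ext x
    simp only [Set.mem_ofPred_eq, sum_indicator_apply, Set.mem_iUnion, Set.mem_iInter,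
      exists_prop]
    constructor
    · intro h
      obtain ⟨S, hS, hcard⟩ := exists_subset_card_eq (Nat.succ_le_of_lt h)
      exact ⟨S, hcard, fun i hi => (mem_filter.mp (hS hi)).2⟩
    · rintro ⟨S, hcard, hS⟩
      calc k < #S := by omega
        _ ≤ _ := card_le_card fun i hi => mem_filter.mpr ⟨mem_univ _, hS i hi⟩
  rw [hlevel]
  refine hO_sup.biSup_mem (Set.toFinite _) hO_empty fun S hS => ?_
  exact hO_inf.biInf_mem_of_nonempty S.finite_toSet (card_pos.mp (by simp_all)) fun i _ => hU i

lemma mem_of_superlevel_mem {f : X → ℕ} {N : ℕ} (hN : ∀ x, f x ≤ N)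
    (hO : ∀ k, {x | k < f x} ∈ O) : f ∈ FO O := by
  refine ⟨N, fun i => {x | i < f x}, fun i => hO i, funext fun x => ?_⟩
  simp only [sum_indicator_apply, Set.mem_ofPred_eq, Fin.card_filter_val_lt, min_eq_right (hN x)]

section Lattice

variable (hO_empty : ∅ ∈ O) (hO_sup : SupClosed O) (hO_inf : InfClosed O)
include hO_empty hO_sup hO_inf

lemma supClosed : SupClosed (FO O) := by
  intro f hf g hg
  obtain ⟨M, hM⟩ := exists_le_of_mem hf
  obtain ⟨N, hN⟩ := exists_le_of_mem hg
  have hbound : ∀ x, (f ⊔ g) x ≤ M + N := fun x =>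
    sup_le ((hM x).trans (M.le_add_right N)) ((hN x).trans (N.le_add_left M))
  refine mem_of_superlevel_mem hbound fun k => ?_
  have hunion : {x | k < (f ⊔ g) x} = {x | k < f x} ∪ {x | k < g x} := by
    ext x; simp [lt_sup_iff]
  exact hunion ▸ hO_sup (superlevel_mem hO_empty hO_sup hO_inf hf k)
    (superlevel_mem hO_empty hO_sup hO_inf hg k)

lemma infClosed : InfClosed (FO O) := by
  intro f hf g hg
  obtain ⟨N, hN⟩ := exists_le_of_mem hf
  refine mem_of_superlevel_mem (fun x => inf_le_left.trans (hN x)) fun k => ?_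
  have hinter : {x | k < (f ⊓ g) x} = {x | k < f x} ∩ {x | k < g x} := by
    ext x; simp [lt_inf_iff]
  exact hinter ▸ hO_inf (superlevel_mem hO_empty hO_sup hO_inf hf k)
    (superlevel_mem hO_empty hO_sup hO_inf hg k)

end Lattice

lemma zero_mem : (0 : X → ℕ) ∈ FO O := ⟨0, Fin.elim0, fun i => i.elim0, by simp⟩

end FO

theorem stmt11_general {X : Type*} (O : Set (Set X))
    (hO_empty : (∅ : Set X) ∈ O)
    (hO_union : ∀ U ∈ O, ∀ V ∈ O, U ∪ V ∈ O)
    (hO_inter : ∀ U ∈ O, ∀ V ∈ O, U ∩ V ∈ O) :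
    (∀ f ∈ FO O, ∀ g ∈ FO O,
      f ⊔ g ∈ FO O ∧ f ⊓ g ∈ FO O ∧
      (f ≤ f ⊔ g ∧ g ≤ f ⊔ g ∧ ∀ h ∈ FO O, f ≤ h → g ≤ h → f ⊔ g ≤ h) ∧
      (f ⊓ g ≤ f ∧ f ⊓ g ≤ g ∧ ∀ h ∈ FO O, h ≤ f → h ≤ g → h ≤ f ⊓ g)) ∧
    (∀ A : Finset (X → ℕ), ↑A ⊆ FO O →
      ∃ s ∈ FO O, (∀ f ∈ A, f ≤ s) ∧ ∀ t ∈ FO O, (∀ f ∈ A, f ≤ t) → s ≤ t) ∧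
    (∀ A : Finset (X → ℕ), A.Nonempty → ↑A ⊆ FO O →
      ∃ s ∈ FO O, (∀ f ∈ A, s ≤ f) ∧ ∀ t ∈ FO O, (∀ f ∈ A, t ≤ f) → t ≤ s) := by
  have hsup : SupClosed (FO O) := FO.supClosed hO_empty hO_union hO_inter
  have hinf : InfClosed (FO O) := FO.infClosed hO_empty hO_union hO_inter
  refine ⟨fun f hf g hg => ⟨hsup hf hg, hinf hf hg, ⟨le_sup_left, le_sup_right,
    fun _ _ => sup_le⟩, ⟨inf_le_left, inf_le_right, fun _ _ => le_inf⟩⟩, ?_, ?_⟩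
  · intro A hA
    refine ⟨A.sup id, ?_, fun f hf => le_sup (f := id) hf, fun t _ ht => Finset.sup_le ht⟩
    rcases A.eq_empty_or_nonempty with rfl | hne
    · exact FO.zero_mem
    · exact hsup.finsetSup_mem hne fun f hf => hA hf
  · intro A hne hA
    exact ⟨A.inf' hne id, hinf.finsetInf'_mem hne fun f hf => hA hf,
      fun f hf => inf'_le id hf, fun t _ ht => (le_inf'_iff hne id).mpr ht⟩

/-- The pointwise maximum and minimum of `f, g ∈ F(O)` belong to `F(O)` and are the
least upper bound resp. greatest lower bound of `{f, g}` in the poset `(F(O), ≤)`.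
Consequently, every finite subset of `F(O)` has a least upper bound in `F(O)`, and
every nonempty finite subset has a greatest lower bound in `F(O)`. -/
theorem stmt11 {X : Type*} [TopologicalSpace X] (O : Set (Set X))
    (hO_open : ∀ U ∈ O, IsOpen U)
    (hO_empty : (∅ : Set X) ∈ O)
    (hO_union : ∀ U ∈ O, ∀ V ∈ O, U ∪ V ∈ O)
    (hO_inter : ∀ U ∈ O, ∀ V ∈ O, U ∩ V ∈ O)
    (hO_basis : IsTopologicalBasis O) :
    (∀ f ∈ FO O, ∀ g ∈ FO O,
      f ⊔ g ∈ FO O ∧ f ⊓ g ∈ FO O ∧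
      (f ≤ f ⊔ g ∧ g ≤ f ⊔ g ∧ ∀ h ∈ FO O, f ≤ h → g ≤ h → f ⊔ g ≤ h) ∧
      (f ⊓ g ≤ f ∧ f ⊓ g ≤ g ∧ ∀ h ∈ FO O, h ≤ f → h ≤ g → h ≤ f ⊓ g)) ∧
    (∀ A : Finset (X → ℕ), ↑A ⊆ FO O →
      ∃ s ∈ FO O, (∀ f ∈ A, f ≤ s) ∧ ∀ t ∈ FO O, (∀ f ∈ A, f ≤ t) → s ≤ t) ∧
    (∀ A : Finset (X → ℕ), A.Nonempty → ↑A ⊆ FO O →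
      ∃ s ∈ FO O, (∀ f ∈ A, s ≤ f) ∧ ∀ t ∈ FO O, (∀ f ∈ A, t ≤ f) → t ≤ s) :=
  stmt11_general O hO_empty hO_union hO_inter
end

section
/- Let X be a locally compact Hausdorff space and let O be a basis for the topology of X that contains the empty set and is closed under finite unions and finite intersections. Let K₁,…,Kₙ ⊆ X be compact and V₁,…,V_m ⊆ X be open, and assume the pointwise inequality ∑_{i=1}^n 1_{K_i} ≤ ∑_{j=1}^m 1_{V_j}. Then there are sets W_{i,j} ∈ O with compact closure, for 1 ≤ i ≤ n and 1 ≤ j ≤ m, such that K_i ⊆ ⋃_{j=1}^m W_{i,j} for every i, and for every j the closures cl(W_{1,j}),…,cl(W_{n,j}) are pairwise disjoint with union contained in V_j. Moreover, if open neighbourhoods U_i ⊇ K_i are given, one may additionally arrange W_{i,j} ⊆ U_i for all i, j. -/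
open TopologicalSpace Set Finset

set_option linter.unusedSectionVars false

section StmtAux
variable {X : Type*} [TopologicalSpace X] [T2Space X] [LocallyCompactSpace X]

open Classical in
noncomputable def stmt15_idx {Y : Type*} {k : ℕ} (F : Fin k → Set Y) (x : Y) : Finset (Fin k) :=
  Finset.univ.filter (fun j => x ∈ F j)

lemma stmt15_mem_idx {Y : Type*} {k : ℕ} {F : Fin k → Set Y} {x : Y} {j : Fin k} :
    j ∈ stmt15_idx F x ↔ x ∈ F j := by
  simp [stmt15_idx]

lemma stmt15_basicNbhd (O : Set (Set X)) (hO_basis : IsTopologicalBasis O)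
    {G : Set X} (hG : IsOpen G) {x : X} (hx : x ∈ G) :
    ∃ B ∈ O, x ∈ B ∧ IsCompact (closure B) ∧ closure B ⊆ G := by
  obtain ⟨C, hC, hxC, hCG⟩ := exists_compact_subset hG hx
  obtain ⟨B, hBO, hxB, hBsub⟩ := hO_basis.exists_subset_of_mem_open hxC isOpen_interior
  have hclB : closure B ⊆ C := closure_minimal (hBsub.trans interior_subset) hC.isClosed
  exact ⟨B, hBO, hxB, hC.of_isClosed_subset isClosed_closure hclB, hclB.trans hCG⟩

lemma stmt15_biUnion_mem (O : Set (Set X)) (hO_empty : (∅ : Set X) ∈ O)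
    (hO_union : ∀ U ∈ O, ∀ V ∈ O, U ∪ V ∈ O)
    {α : Type*} [DecidableEq α] (s : Finset α) (f : α → Set X) (hf : ∀ a ∈ s, f a ∈ O) :
    (⋃ a ∈ s, f a) ∈ O := by
  induction s using Finset.induction_on with
  | empty => simpa using hO_empty
  | @insert a s ha ih =>
      rw [Finset.set_biUnion_insert]
      exact hO_union _ (hf a (Finset.mem_insert_self a s)) _
        (ih fun b hb => hf b (Finset.mem_insert_of_mem hb))

lemma stmt15_aux (O : Set (Set X))
    (hO_empty : (∅ : Set X) ∈ O)
    (hO_basis : IsTopologicalBasis O)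
    (hO_union : ∀ U ∈ O, ∀ V ∈ O, U ∪ V ∈ O) :
    ∀ (n m : ℕ) (K : Fin n → Set X), (∀ i, IsCompact (K i)) →
      ∀ (V : Fin m → Set X), (∀ j, IsOpen (V j)) →
      ∀ (U : Fin n → Set X), (∀ i, IsOpen (U i)) → (∀ i, K i ⊆ U i) →
      (∀ x : X, (stmt15_idx K x).card ≤ (stmt15_idx V x).card) →
      ∃ W : Fin n → Fin m → Set X,
        (∀ i j, W i j ∈ O) ∧
        (∀ i j, IsCompact (closure (W i j))) ∧
        (∀ i, K i ⊆ ⋃ j, W i j) ∧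
        (∀ j, ∀ i i', i ≠ i' → Disjoint (closure (W i j)) (closure (W i' j))) ∧
        (∀ j, (⋃ i, closure (W i j)) ⊆ V j) ∧
        (∀ i j, W i j ⊆ U i) := by
  intro n
  induction n with
  | zero =>
      intro m K _ V _ U _ _ _
      exact ⟨fun i => i.elim0, fun i => i.elim0, fun i => i.elim0, fun i => i.elim0,
        fun j i => i.elim0, fun j => by simp, fun i => i.elim0⟩
  | succ n IH =>
      intro m K hK V hV U hU hKU hle
      classical
      -- cardinality of the index set of K's containing x, for x in the last compact
      have hScard : ∀ x, x ∈ K (Fin.last n) →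
          (stmt15_idx (fun i : Fin n => K i.castSucc) x).card + 1 ≤ (stmt15_idx V x).card := by
        intro x hx
        have h1 : insert (Fin.last n)
            ((stmt15_idx (fun i : Fin n => K i.castSucc) x).image Fin.castSucc)
            ⊆ stmt15_idx K x := by
          intro i hi
          rcases Finset.mem_insert.1 hi with rfl | hi
          · exact stmt15_mem_idx.2 hx
          · obtain ⟨i', hi', rfl⟩ := Finset.mem_image.1 hi
            have hmem : x ∈ K i'.castSucc := (stmt15_mem_idx (F := fun i : Fin n => K i.castSucc)).1 hi'
            exact stmt15_mem_idx.2 hmem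
        have h2 : (insert (Fin.last n)
            ((stmt15_idx (fun i : Fin n => K i.castSucc) x).image Fin.castSucc)).card
            = (stmt15_idx (fun i : Fin n => K i.castSucc) x).card + 1 := by
          rw [Finset.card_insert_of_notMem, Finset.card_image_of_injective _
            (Fin.castSucc_injective n)]
          simp only [Finset.mem_image]
          rintro ⟨i', -, hcast⟩
          exact absurd hcast (Fin.castSucc_lt_last i').ne
        calc (stmt15_idx (fun i : Fin n => K i.castSucc) x).card + 1 = _ := h2.symm
          _ ≤ (stmt15_idx K x).card := Finset.card_le_card h1
          _ ≤ (stmt15_idx V x).card := hle x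
      have hNex : ∀ x ∈ K (Fin.last n), ∃ B, B ∈ O ∧ x ∈ B ∧ IsCompact (closure B) ∧
          closure B ⊆ U (Fin.last n) ∧ (∀ j ∈ stmt15_idx V x, closure B ⊆ V j) ∧
          (∀ i : Fin n, x ∉ K i.castSucc → Disjoint (closure B) (K i.castSucc)) := by
        intro x hx
        have hGopen : IsOpen (U (Fin.last n) ∩ (⋂ j ∈ stmt15_idx V x, V j) ∩
            (⋂ i ∈ Finset.univ.filter (fun i : Fin n => x ∉ K i.castSucc), (K i.castSucc)ᶜ)) :=
          ((hU _).inter (isOpen_biInter_finset fun j _ => hV j)).inter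
            (isOpen_biInter_finset fun i _ => (hK i.castSucc).isClosed.isOpen_compl)
        have hxG : x ∈ U (Fin.last n) ∩ (⋂ j ∈ stmt15_idx V x, V j) ∩
            (⋂ i ∈ Finset.univ.filter (fun i : Fin n => x ∉ K i.castSucc), (K i.castSucc)ᶜ) :=
          ⟨⟨hKU _ hx, Set.mem_iInter₂.2 fun j hj => stmt15_mem_idx.1 hj⟩,
           Set.mem_iInter₂.2 fun i hi => (Finset.mem_filter.1 hi).2⟩
        obtain ⟨B, hBO, hxB, hBc, hBsub⟩ := stmt15_basicNbhd O hO_basis hGopen hxG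
        refine ⟨B, hBO, hxB, hBc, fun y hy => (hBsub hy).1.1, ?_, ?_⟩
        · intro j hj y hy
          exact Set.mem_iInter₂.1 (hBsub hy).1.2 j hj
        · intro i hi
          refine Set.disjoint_left.2 fun y hy hyK => ?_
          exact Set.mem_iInter₂.1 (hBsub hy).2 i
            (Finset.mem_filter.2 ⟨Finset.mem_univ _, hi⟩) hyK
      choose! N hNO hxN hNc hNU hNV hNdisj using hNex
      obtain ⟨t, htK, htcover⟩ := (hK (Fin.last n)).elim_nhds_subcover N
        (fun x hx => (hO_basis.isOpen (hNO x hx)).mem_nhds (hxN x hx))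
      have hTne : ∀ x ∈ t, (stmt15_idx V x).Nonempty := by
        intro x hx
        exact Finset.card_pos.1 (by have := hScard x (htK x hx); omega)
      -- the assigned index set: the singleton of the minimal j with x ∈ V j
      set σ : X → Finset (Fin m) :=
        fun x => if h : (stmt15_idx V x).Nonempty then {(stmt15_idx V x).min' h} else ∅ with hσ
      have hσt : ∀ x ∈ t, ∃ h : (stmt15_idx V x).Nonempty,
          σ x = {(stmt15_idx V x).min' h} := by
        intro x hx
        exact ⟨hTne x hx, by simp [hσ, hTne x hx]⟩
      set D : Fin m → Set X := fun j => ⋃ x ∈ t.filter (fun x => j ∈ σ x), N x with hD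
      have hDO : ∀ j, D j ∈ O := fun j => stmt15_biUnion_mem O hO_empty hO_union _ _
        (fun x hx => hNO x (htK x (Finset.mem_filter.1 hx).1))
      have hclD : ∀ j, closure (D j) = ⋃ x ∈ t.filter (fun x => j ∈ σ x), closure (N x) :=
        fun j => Finset.closure_biUnion _ _
      have hDc : ∀ j, IsCompact (closure (D j)) := by
        intro j
        rw [hclD]
        exact (t.filter _).isCompact_biUnion
          fun x hx => hNc x (htK x (Finset.mem_filter.1 hx).1)
      have hmemσ : ∀ x ∈ t, ∀ j ∈ σ x,
          j ∈ stmt15_idx V x ∧ ∀ j' ∈ stmt15_idx V x, j ≤ j' := by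
        intro x hx j hj
        obtain ⟨h, hσx⟩ := hσt x hx
        rw [hσx, Finset.mem_singleton] at hj
        subst hj
        exact ⟨(stmt15_idx V x).min'_mem h, fun j' hj' => (stmt15_idx V x).min'_le j' hj'⟩
      have hclDV : ∀ j, closure (D j) ⊆ V j := by
        intro j
        rw [hclD]
        refine Set.iUnion₂_subset fun x hx => ?_
        obtain ⟨hxt, hjσ⟩ := Finset.mem_filter.1 hx
        exact hNV x (htK x hxt) j (hmemσ x hxt j hjσ).1
      have hDU : ∀ j, D j ⊆ U (Fin.last n) := by
        intro j
        refine Set.iUnion₂_subset fun x hx => ?_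
        obtain ⟨hxt, -⟩ := Finset.mem_filter.1 hx
        exact subset_closure.trans (hNU x (htK x hxt))
      have hcoverlast : K (Fin.last n) ⊆ ⋃ j, D j := by
        intro y hy
        obtain ⟨x, hxt, hyN⟩ := Set.mem_iUnion₂.1 (htcover hy)
        obtain ⟨h, hσx⟩ := hσt x hxt
        exact Set.mem_iUnion.2 ⟨(stmt15_idx V x).min' h,
          Set.mem_biUnion (Finset.mem_filter.2 ⟨hxt, by simp [hσx]⟩) hyN⟩
      set V' : Fin m → Set X := fun j => V j \ closure (D j) with hV'
      have hV'open : ∀ j, IsOpen (V' j) := fun j => (hV j).sdiff isClosed_closure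
      have hle' : ∀ x : X, (stmt15_idx (fun i : Fin n => K i.castSucc) x).card ≤
          (stmt15_idx V' x).card := by
        intro z
        have hRT : stmt15_idx (fun j => closure (D j)) z ⊆ stmt15_idx V z := by
          intro j hj
          exact stmt15_mem_idx.2 (hclDV j (stmt15_mem_idx.1 hj))
        have hfilter : stmt15_idx V' z
            = stmt15_idx V z \ stmt15_idx (fun j => closure (D j)) z := by
          ext j
          simp only [stmt15_mem_idx, Finset.mem_sdiff, hV', Set.mem_diff]
        have hSzcast : (stmt15_idx (fun i : Fin n => K i.castSucc) z).card
            ≤ (stmt15_idx K z).card := by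
          calc (stmt15_idx (fun i : Fin n => K i.castSucc) z).card
              = ((stmt15_idx (fun i : Fin n => K i.castSucc) z).image Fin.castSucc).card :=
              (Finset.card_image_of_injective _ (Fin.castSucc_injective n)).symm
            _ ≤ _ := Finset.card_le_card (by
                intro i hi
                obtain ⟨i', hi', rfl⟩ := Finset.mem_image.1 hi
                have hmem : z ∈ K i'.castSucc := (stmt15_mem_idx (F := fun i : Fin n => K i.castSucc)).1 hi'
                exact stmt15_mem_idx.2 hmem)
        have key : (stmt15_idx (fun i : Fin n => K i.castSucc) z).card
            + (stmt15_idx (fun j => closure (D j)) z).card ≤ (stmt15_idx V z).card := by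
          rcases (stmt15_idx (fun j => closure (D j)) z).eq_empty_or_nonempty with hRe | hRne
          · rw [hRe]
            simp only [Finset.card_empty, add_zero]
            exact hSzcast.trans (hle z)
          · set R := stmt15_idx (fun j => closure (D j)) z with hRdef
            set js := R.max' hRne with hjs
            have hjsR : js ∈ R := R.max'_mem hRne
            have hzD : z ∈ closure (D js) := stmt15_mem_idx.1 hjsR
            rw [hclD] at hzD
            obtain ⟨x, hx, hzN⟩ := Set.mem_iUnion₂.1 hzD
            obtain ⟨hxt, hjσ⟩ := Finset.mem_filter.1 hx
            have hxK : x ∈ K (Fin.last n) := htK x hxt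
            have hmin := hmemσ x hxt js hjσ
            have hSS : stmt15_idx (fun i : Fin n => K i.castSucc) z
                ⊆ stmt15_idx (fun i : Fin n => K i.castSucc) x := by
              intro i hi
              have hziK : z ∈ K i.castSucc := (stmt15_mem_idx (F := fun i : Fin n => K i.castSucc)).1 hi

              by_contra hxi
              have hxi' : x ∉ K i.castSucc := fun h => hxi (stmt15_mem_idx.2 h)
              exact Set.disjoint_left.1 (hNdisj x hxK i hxi') hzN hziK
            have hTT : stmt15_idx V x ⊆ stmt15_idx V z := by
              intro j hj
              exact stmt15_mem_idx.2 (hNV x hxK j hj hzN)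
            have hdisj : Disjoint (R.erase js) (stmt15_idx V x) := by
              rw [Finset.disjoint_left]
              intro j hj hjT
              have h1 : j < js := lt_of_le_of_ne (R.le_max' j (Finset.mem_of_mem_erase hj))
                (Finset.ne_of_mem_erase hj)
              exact absurd (hmin.2 j hjT) (not_le.2 h1)
            have hcard1 : (R.erase js).card + (stmt15_idx V x).card
                ≤ (stmt15_idx V z).card := by
              rw [← Finset.card_union_of_disjoint hdisj]
              exact Finset.card_le_card
                (Finset.union_subset ((Finset.erase_subset _ _).trans hRT) hTT)
            have h5 : (R.erase js).card = R.card - 1 := Finset.card_erase_of_mem hjsR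
            have h6 := hScard x hxK
            have h7 := Finset.card_le_card hSS
            have h8 : 1 ≤ R.card := Finset.card_pos.2 hRne
            omega
        have hRcard := Finset.card_le_card hRT
        rw [hfilter, Finset.card_sdiff_of_subset hRT]
        omega
      obtain ⟨W', hW'O, hW'c, hW'cover, hW'disj, hW'V, hW'U⟩ :=
        IH m (fun i => K i.castSucc) (fun i => hK _) V' hV'open
          (fun i => U i.castSucc) (fun i => hU _) (fun i => hKU _) hle'
      refine ⟨Fin.lastCases D W', ?_, ?_, ?_, ?_, ?_, ?_⟩
      · intro i j
        rcases Fin.eq_castSucc_or_eq_last i with ⟨i0, rfl⟩ | rfl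
        · simpa using hW'O i0 j
        · simpa using hDO j
      · intro i j
        rcases Fin.eq_castSucc_or_eq_last i with ⟨i0, rfl⟩ | rfl
        · simpa using hW'c i0 j
        · simpa using hDc j
      · intro i
        rcases Fin.eq_castSucc_or_eq_last i with ⟨i0, rfl⟩ | rfl
        · simpa using hW'cover i0
        · simpa using hcoverlast
      · intro j i i' hne
        rcases Fin.eq_castSucc_or_eq_last i with ⟨i0, rfl⟩ | rfl <;>
          rcases Fin.eq_castSucc_or_eq_last i' with ⟨i0', rfl⟩ | rfl
        · simp only [Fin.lastCases_castSucc]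
          exact hW'disj j i0 i0' (fun h => hne (congrArg Fin.castSucc h))
        · simp only [Fin.lastCases_castSucc, Fin.lastCases_last]
          refine Set.disjoint_left.2 fun y hyW hyD => ?_
          exact (hW'V j (Set.mem_iUnion.2 ⟨i0, hyW⟩)).2 hyD
        · simp only [Fin.lastCases_castSucc, Fin.lastCases_last]
          refine Set.disjoint_left.2 fun y hyD hyW => ?_
          exact (hW'V j (Set.mem_iUnion.2 ⟨i0', hyW⟩)).2 hyD
        · exact absurd rfl hne
      · intro j
        refine Set.iUnion_subset fun i => ?_
        rcases Fin.eq_castSucc_or_eq_last i with ⟨i0, rfl⟩ | rfl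
        · simp only [Fin.lastCases_castSucc]
          exact fun y hy => (hW'V j (Set.mem_iUnion.2 ⟨i0, hy⟩)).1
        · simpa using hclDV j
      · intro i j
        rcases Fin.eq_castSucc_or_eq_last i with ⟨i0, rfl⟩ | rfl
        · simpa using hW'U i0 j
        · simpa using hDU j

end StmtAux

/-- If `K₁, …, Kₙ` are compact, `V₁, …, V_m` are open and
`∑ 1_{K_i} ≤ ∑ 1_{V_j}` pointwise, then there are basic sets `W_{i,j} ∈ O` with compact
closures with `K_i ⊆ ⋃_j W_{i,j}` for each `i`, while for each `j` the closures
`cl(W_{1,j}), …, cl(W_{n,j})` are pairwise disjoint with union contained in `V_j`.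
Moreover, given open neighbourhoods `U_i ⊇ K_i` one may arrange `W_{i,j} ⊆ U_i`. -/
theorem stmt15 {X : Type*} [TopologicalSpace X] [T2Space X] [LocallyCompactSpace X]
    (O : Set (Set X))
    (hO_empty : (∅ : Set X) ∈ O)
    (hO_basis : IsTopologicalBasis O)
    (hO_union : ∀ U ∈ O, ∀ V ∈ O, U ∪ V ∈ O)
    (hO_inter : ∀ U ∈ O, ∀ V ∈ O, U ∩ V ∈ O)
    (n m : ℕ)
    (K : Fin n → Set X) (hK : ∀ i, IsCompact (K i))
    (V : Fin m → Set X) (hV : ∀ j, IsOpen (V j))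
    (hle : (∑ i, Set.indicator (K i) (1 : X → ℕ)) ≤
      ∑ j, Set.indicator (V j) (1 : X → ℕ)) :
    (∃ W : Fin n → Fin m → Set X,
      (∀ i j, W i j ∈ O) ∧
      (∀ i j, IsCompact (closure (W i j))) ∧
      (∀ i, K i ⊆ ⋃ j, W i j) ∧
      (∀ j, ∀ i i' : Fin n, i ≠ i' →
        Disjoint (closure (W i j)) (closure (W i' j))) ∧
      (∀ j, (⋃ i, closure (W i j)) ⊆ V j)) ∧
    (∀ U : Fin n → Set X, (∀ i, IsOpen (U i)) → (∀ i, K i ⊆ U i) →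
      ∃ W : Fin n → Fin m → Set X,
        (∀ i j, W i j ∈ O) ∧
        (∀ i j, IsCompact (closure (W i j))) ∧
        (∀ i, K i ⊆ ⋃ j, W i j) ∧
        (∀ j, ∀ i i' : Fin n, i ≠ i' →
          Disjoint (closure (W i j)) (closure (W i' j))) ∧
        (∀ j, (⋃ i, closure (W i j)) ⊆ V j) ∧
        (∀ i j, W i j ⊆ U i)) := by
  classical
  have hle' : ∀ x : X, (stmt15_idx K x).card ≤ (stmt15_idx V x).card := by
    intro x
    have h := hle x
    simp only [Finset.sum_apply, Set.indicator_apply, Pi.one_apply] at h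
    simp only [stmt15_idx, Finset.card_filter]
    convert h using 2
  constructor
  · obtain ⟨W, h1, h2, h3, h4, h5, -⟩ :=
      stmt15_aux O hO_empty hO_basis hO_union n m K hK V hV
        (fun _ => Set.univ) (fun _ => isOpen_univ) (fun _ => Set.subset_univ _) hle'
    exact ⟨W, h1, h2, h3, h4, h5⟩
  · intro U hUo hKUs
    exact stmt15_aux O hO_empty hO_basis hO_union n m K hK V hV U hUo hKUs hle'
end

section
/- Let X be a locally compact Hausdorff space and let O be a basis for the topology of X that contains the empty set and is closed under finite unions and finite intersections. Let U₁,…,Uₙ, V₁,…,V_m ∈ O. Then the pointwise inequality ∑_{i=1}^n 1_{U_i} ≤ ∑_{j=1}^m 1_{V_j} holds if and only if for all compact subsets K_i ⊆ U_i (1 ≤ i ≤ n) there are sets W_{i,j} ∈ O, for 1 ≤ i ≤ n and 1 ≤ j ≤ m, such that K_i ⊆ ⋃_{j=1}^m W_{i,j} for every i, and for every j the sets W_{1,j},…,W_{n,j} are pairwise disjoint with union contained in V_j. -/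
/-!
Let `N_A(x) = coverCount A x` count the members of a finite family `A` containing `x`. For the
forward direction it suffices to refine compact `K_i` with `N_K ≤ N_V` by open sets, by induction
on the number of `V_j`. Let `V'` be `V` without `V₀` and `T = {N_{V'} < N_K}`. On `T` we have
`N_K = N_{V'} + 1` and `x ∈ V₀`, and the set of `i` with `x ∈ K_i` is locally constant, so sending
`x` to the least such `i` splits `T` into disjoint compact pieces `P_i ⊆ K_i`. Thickening them to
disjoint open `D_i ⊆ V₀` and removing `D_i` from `K_i` gives `N_{K \ D} ≤ N_{V'}`, and induction
finishes. The open refinement is shrunk to members of `O` by compactness, as finite unions of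
members of `O` form a directed family. Conversely, the condition for `K_i = U_i ∩ {x}` injects
`{i | x ∈ U_i}` into `{j | x ∈ V_j}`.
-/

open TopologicalSpace Set Filter Topology

section

variable {X ι κ : Type*}

noncomputable def coverCount (A : ι → Set X) (x : X) : ℕ := {i | x ∈ A i}.ncard

theorem sum_indicator_one_eq_coverCount [Fintype ι] (A : ι → Set X) :
    ∑ i, (A i).indicator (1 : X → ℕ) = coverCount A := by
  classical
  ext x
  rw [Finset.sum_apply, coverCount, ← Finset.coe_filter_univ, ncard_coe_finset,
    Finset.card_filter]
  simp only [indicator_apply, Pi.one_apply]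

section Finite

variable [Finite ι] {A B : ι → Set X}

theorem coverCount_le_of_subset {x y : X} (h : {i | x ∈ A i} ⊆ {i | y ∈ B i}) :
    coverCount A x ≤ coverCount B y :=
  ncard_le_ncard h

theorem coverCount_mono (h : ∀ i, A i ⊆ B i) : coverCount A ≤ coverCount B :=
  fun _ => coverCount_le_of_subset fun i hi => h i hi

theorem coverCount_lt_of_subset {x : X} {i : ι} (h : ∀ i, A i ⊆ B i) (hB : x ∈ B i)
    (hA : x ∉ A i) : coverCount A x < coverCount B x :=
  ncard_lt_ncard ⟨fun i hi => h i hi, fun hBA => hA (hBA hB)⟩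

theorem coverCount_pos {x : X} : 0 < coverCount A x ↔ ∃ i, x ∈ A i :=
  ncard_pos

theorem coverCount_fin_succ {m : ℕ} (V : Fin (m + 1) → Set X) (x : X) :
    coverCount V x = (V 0).indicator 1 x + coverCount (fun j : Fin m => V j.succ) x := by
  simp only [← sum_indicator_one_eq_coverCount, Finset.sum_apply, Fin.sum_univ_succ]

end Finite

theorem coverCount_le_of_refinement [Finite κ] {A : ι → Set X} {V : κ → Set X}
    {W : ι → κ → Set X} (hAW : ∀ i, A i ⊆ ⋃ j, W i j)
    (hW : ∀ j, Pairwise fun i i' => Disjoint (W i j) (W i' j))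
    (hWV : ∀ i j, W i j ⊆ V j) : coverCount A ≤ coverCount V := by
  intro x
  choose g hg using fun i : {i // x ∈ A i} => mem_iUnion.1 (hAW i i.2)
  rw [coverCount, coverCount, ← Nat.card_coe_set_eq, ← Nat.card_coe_set_eq]
  refine Nat.card_le_card_of_injective (fun i => ⟨g i, hWV _ _ (hg i)⟩) fun i i' hii' => ?_
  by_contra hne
  have hg' : g i = g i' := congrArg Subtype.val hii'
  exact (hW (g i) (Subtype.coe_injective.ne hne)).le_bot ⟨hg i, hg' ▸ hg i'⟩

section Topology

variable [TopologicalSpace X] [Finite ι]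

theorem eventually_setOf_mem_subset_of_isClosed {K : ι → Set X} (hK : ∀ i, IsClosed (K i))
    (x : X) : ∀ᶠ y in 𝓝 x, {i | y ∈ K i} ⊆ {i | x ∈ K i} := by
  refine eventually_all.2 fun i => ?_
  by_cases hx : x ∈ K i
  · exact .of_forall fun _ _ => hx
  · exact ((hK i).isOpen_compl.eventually_mem hx).mono fun _ hy hyK => absurd hyK hy

theorem eventually_setOf_mem_supset_of_isOpen {V : ι → Set X} (hV : ∀ i, IsOpen (V i))
    (x : X) : ∀ᶠ y in 𝓝 x, {i | x ∈ V i} ⊆ {i | y ∈ V i} :=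
  eventually_all.2 fun i => by
    by_cases hx : x ∈ V i
    · exact ((hV i).eventually_mem hx).mono fun _ hy _ => hy
    · exact .of_forall fun _ hx' => absurd hx' hx

theorem isClosed_setOf_coverCount_lt_and_forall_notMem {K : ι → Set X} {V : κ → Set X}
    [Finite κ] (hK : ∀ i, IsClosed (K i)) (hV : ∀ j, IsOpen (V j))
    (hKV : ∀ x, coverCount K x ≤ coverCount V x + 1) (s : Set ι) :
    IsClosed {x | coverCount V x < coverCount K x ∧ ∀ i ∈ s, x ∉ K i} := by
  -- Nearby points can only lose `K`-indices and gain `V`-indices; `hKV` then forces a nearby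
  -- point of the set to have exactly the `K`-indices of `x`.
  refine isClosed_iff_frequently.2 fun x hx => ?_
  obtain ⟨y, ⟨hyV, hys⟩, hyK, hxV⟩ := (hx.and_eventually
    ((eventually_setOf_mem_subset_of_isClosed hK x).and
      (eventually_setOf_mem_supset_of_isOpen hV x))).exists
  have hK_le := coverCount_le_of_subset hyK
  have hV_le := coverCount_le_of_subset hxV
  have := hKV x
  have hK_eq : {i | y ∈ K i} = {i | x ∈ K i} :=
    eq_of_subset_of_ncard_le hyK (show coverCount K x ≤ coverCount K y by omega)
  exact ⟨by omega, fun i hi hxi => hys i hi (hK_eq.superset hxi)⟩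

variable [T2Space X]

theorem exists_pairwise_disjoint_cover_setOf_coverCount_lt [Finite κ] {K : ι → Set X}
    {V : κ → Set X} (hK : ∀ i, IsCompact (K i)) (hV : ∀ j, IsOpen (V j))
    (hKV : ∀ x, coverCount K x ≤ coverCount V x + 1) :
    ∃ P : ι → Set X, (∀ i, IsCompact (P i) ∧ P i ⊆ K i) ∧
      (Pairwise fun i i' => Disjoint (P i) (P i')) ∧
      ∀ x, coverCount V x < coverCount K x → ∃ i, x ∈ P i := by
  obtain ⟨n, ⟨e⟩⟩ := Finite.exists_equiv_fin ι
  -- `x` is assigned to the least `i` with `x ∈ K i`, for an arbitrary linear order on `ι`.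
  let : LinearOrder ι := LinearOrder.lift' e e.injective
  refine ⟨fun i => K i ∩ {x | coverCount V x < coverCount K x ∧ ∀ i' ∈ Iio i, x ∉ K i'},
    fun i => ⟨(hK i).inter_right (isClosed_setOf_coverCount_lt_and_forall_notMem
      (fun i => (hK i).isClosed) hV hKV _), inter_subset_left⟩, ?_, ?_⟩
  · intro i i' hii'
    wlog h : i < i' generalizing i i'
    · exact (this hii'.symm (hii'.lt_or_gt.resolve_left h)).symm
    exact disjoint_left.2 fun x hx hx' => hx'.2.2 i h hx.1
  · intro x hx
    obtain ⟨i, hi, hmin⟩ :=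
      wellFounded_lt.has_min {i | x ∈ K i} (coverCount_pos (A := K).1 (by omega))
    exact ⟨i, hi, hx, fun i' hi' hxi' => hmin i' hxi' hi'⟩

theorem exists_isOpen_pairwise_disjoint_of_isCompact {P : ι → Set X}
    (hP : ∀ i, IsCompact (P i)) (hd : Pairwise fun i j => Disjoint (P i) (P j)) :
    ∃ D : ι → Set X, (∀ i, IsOpen (D i) ∧ P i ⊆ D i) ∧
      Pairwise fun i j => Disjoint (D i) (D j) :=
  Pairwise.exists_mem_filter_basis_of_disjoint (fun i j h => separatedNhds_iff_disjoint.1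
    (SeparatedNhds.of_isCompact_isCompact (hP i) (hP j) (hd h))) fun i => hasBasis_nhdsSet (P i)

theorem exists_disjoint_isOpen_coverCount_diff_le {m : ℕ} {K : ι → Set X}
    {V : Fin (m + 1) → Set X} (hK : ∀ i, IsCompact (K i)) (hV : ∀ j, IsOpen (V j))
    (hKV : coverCount K ≤ coverCount V) :
    ∃ D : ι → Set X, (∀ i, IsOpen (D i) ∧ D i ⊆ V 0) ∧
      (Pairwise fun i i' => Disjoint (D i) (D i')) ∧
      coverCount (fun i => K i \ D i) ≤ coverCount (fun j : Fin m => V j.succ) := by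
  set V' : Fin m → Set X := fun j => V j.succ
  have hK_le : ∀ x, coverCount K x ≤ (V 0).indicator 1 x + coverCount V' x :=
    fun x => (hKV x).trans (coverCount_fin_succ V x).le
  have hK_le_succ : ∀ x, coverCount K x ≤ coverCount V' x + 1 := fun x => by
    have := (V 0).indicator_le_self (1 : X → ℕ) x
    have := hK_le x
    simp only [Pi.one_apply] at *
    omega
  have hV₀ : ∀ x, coverCount V' x < coverCount K x → x ∈ V 0 := fun x hx => by
    by_contra h
    have := hK_le x
    rw [indicator_of_notMem h] at this
    omega
  obtain ⟨P, hP, hPd, hPK⟩ :=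
    exists_pairwise_disjoint_cover_setOf_coverCount_lt hK (fun j : Fin m => hV j.succ)
      hK_le_succ
  obtain ⟨D, hD, hDd⟩ := exists_isOpen_pairwise_disjoint_of_isCompact (fun i => (hP i).1) hPd
  refine ⟨fun i => D i ∩ V 0, fun i => ⟨(hD i).1.inter (hV 0), inter_subset_right⟩,
    fun i i' h => (hDd h).mono inter_subset_left inter_subset_left, fun x => ?_⟩
  let K' i := K i \ (D i ∩ V 0)
  change coverCount K' x ≤ coverCount V' x
  have hK'K : ∀ i, K' i ⊆ K i := fun i => sdiff_subset
  have hdiff : coverCount K' x ≤ coverCount K x := coverCount_mono hK'K x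
  by_cases hx : coverCount V' x < coverCount K x
  · obtain ⟨i, hi⟩ := hPK x hx
    have := coverCount_lt_of_subset hK'K ((hP i).2 hi)
      (fun h => h.2 ⟨(hD i).2 hi, hV₀ x hx⟩)
    have := hK_le_succ x
    omega
  · omega

theorem exists_isOpen_disjoint_refinement {m : ℕ} {K : ι → Set X} {V : Fin m → Set X}
    (hK : ∀ i, IsCompact (K i)) (hV : ∀ j, IsOpen (V j)) (hKV : coverCount K ≤ coverCount V) :
    ∃ W : ι → Fin m → Set X, (∀ i j, IsOpen (W i j)) ∧ (∀ i, K i ⊆ ⋃ j, W i j) ∧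
      (∀ j, Pairwise fun i i' => Disjoint (W i j) (W i' j)) ∧ ∀ i j, W i j ⊆ V j := by
  induction m generalizing K with
  | zero =>
    refine ⟨fun _ => Fin.elim0, fun _ j => j.elim0, fun i x hx => ?_, fun j => j.elim0,
      fun _ j => j.elim0⟩
    have := (coverCount_pos.2 ⟨i, hx⟩).trans_le (hKV x)
    simp [coverCount, Set.eq_empty_of_isEmpty] at this
  | succ m ih =>
    obtain ⟨D, hD, hDd, hKD⟩ := exists_disjoint_isOpen_coverCount_diff_le hK hV hKV
    obtain ⟨W, hW, hKW, hWd, hWV⟩ :=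
      ih (fun i => (hK i).diff (hD i).1) (fun j : Fin m => hV j.succ) hKD
    refine ⟨fun i => Fin.cons (D i) (W i), ?_, fun i x hx => ?_, ?_, ?_⟩
    · simp only [Fin.forall_fin_succ, Fin.cons_zero, Fin.cons_succ]
      exact fun i => ⟨(hD i).1, hW i⟩
    · by_cases hxD : x ∈ D i
      · exact mem_iUnion.2 ⟨0, hxD⟩
      · obtain ⟨j, hj⟩ := mem_iUnion.1 (hKW i ⟨hx, hxD⟩)
        exact mem_iUnion.2 ⟨j.succ, hj⟩
    · simp only [Fin.forall_fin_succ, Fin.cons_zero, Fin.cons_succ]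
      exact ⟨hDd, hWd⟩
    · simp only [Fin.forall_fin_succ, Fin.cons_zero, Fin.cons_succ]
      exact fun i => ⟨(hD i).2, hWV i⟩

end Topology

theorem TopologicalSpace.IsTopologicalBasis.exists_subset_iUnion_of_isCompact
    [TopologicalSpace X] {O : Set (Set X)} (hO : IsTopologicalBasis O) (hO_empty : ∅ ∈ O)
    (hO_union : ∀ U ∈ O, ∀ V ∈ O, U ∪ V ∈ O) {K : Set X} (hK : IsCompact K)
    {W : κ → Set X} (hW : ∀ j, IsOpen (W j)) (hKW : K ⊆ ⋃ j, W j) :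
    ∃ B : κ → Set X, (∀ j, B j ∈ O ∧ B j ⊆ W j) ∧ K ⊆ ⋃ j, B j := by
  classical
  let F := {B : κ → Set X // ∀ j, B j ∈ O ∧ B j ⊆ W j}
  have : Nonempty F := ⟨⟨fun _ => ∅, fun _ => ⟨hO_empty, empty_subset _⟩⟩⟩
  have hcover : K ⊆ ⋃ B : F, ⋃ j, B.1 j := by
    intro x hx
    obtain ⟨j, hxj⟩ := mem_iUnion.1 (hKW hx)
    obtain ⟨U, hU, hxU, hUW⟩ := hO.exists_subset_of_mem_open hxj (hW j)
    refine mem_iUnion.2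
      ⟨⟨Function.update (fun _ => ∅) j U, fun j' => ?_⟩, mem_iUnion.2 ⟨j, ?_⟩⟩
    · by_cases h : j' = j
      · subst h
        simpa using ⟨hU, hUW⟩
      · simpa [h] using hO_empty
    · simpa using hxU
  have hdirected : Directed (· ⊆ ·) fun B : F => ⋃ j, B.1 j := fun B C =>
    ⟨⟨fun j => B.1 j ∪ C.1 j, fun j => ⟨hO_union _ (B.2 j).1 _ (C.2 j).1,
      union_subset (B.2 j).2 (C.2 j).2⟩⟩, iUnion_mono fun j => subset_union_left,
      iUnion_mono fun j => subset_union_right⟩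
  obtain ⟨B, hKB⟩ := hK.elim_directed_cover _
    (fun B => isOpen_iUnion fun j => hO.isOpen (B.2 j).1) hcover hdirected
  exact ⟨B.1, B.2, hKB⟩

end

theorem stmt16_general {X : Type*} [TopologicalSpace X] [T2Space X]
    (O : Set (Set X))
    (hO_empty : (∅ : Set X) ∈ O)
    (hO_basis : IsTopologicalBasis O)
    (hO_union : ∀ U ∈ O, ∀ V ∈ O, U ∪ V ∈ O)
    (n m : ℕ)
    (U : Fin n → Set X)
    (V : Fin m → Set X) (hV : ∀ j, V j ∈ O) :
    ((∑ i, Set.indicator (U i) (1 : X → ℕ)) ≤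
        ∑ j, Set.indicator (V j) (1 : X → ℕ)) ↔
      (∀ K : Fin n → Set X, (∀ i, IsCompact (K i)) → (∀ i, K i ⊆ U i) →
        ∃ W : Fin n → Fin m → Set X,
          (∀ i j, W i j ∈ O) ∧
          (∀ i, K i ⊆ ⋃ j, W i j) ∧
          (∀ j, ∀ i i' : Fin n, i ≠ i' → Disjoint (W i j) (W i' j)) ∧
          (∀ j, (⋃ i, W i j) ⊆ V j)) := by
  rw [sum_indicator_one_eq_coverCount, sum_indicator_one_eq_coverCount]
  constructor
  · intro hUV K hK hKU
    obtain ⟨W, hW, hKW, hWd, hWV⟩ := exists_isOpen_disjoint_refinement hK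
      (fun j => hO_basis.isOpen (hV j)) ((coverCount_mono hKU).trans hUV)
    choose B hB hKB using fun i =>
      hO_basis.exists_subset_iUnion_of_isCompact hO_empty hO_union (hK i) (hW i) (hKW i)
    exact ⟨B, fun i j => (hB i j).1, hKB,
      fun j i i' h => (hWd j h).mono (hB i j).2 (hB i' j).2,
      fun j => iUnion_subset fun i => (hB i j).2.trans (hWV i j)⟩
  · intro h x
    obtain ⟨W, -, hKW, hWd, hWV⟩ := h (fun i => U i ∩ {x})
      (fun i => (subsingleton_singleton.anti inter_subset_right).isCompact)
      (fun i => inter_subset_left)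
    calc coverCount U x = coverCount (fun i => U i ∩ {x}) x := by simp [coverCount]
      _ ≤ coverCount V x := coverCount_le_of_refinement hKW hWd
          (fun i j => (subset_iUnion (fun i => W i j) i).trans (hWV j)) x

/-- For `U₁, …, Uₙ, V₁, …, V_m ∈ O`, the inequality `∑ 1_{U_i} ≤ ∑ 1_{V_j}` holds
pointwise if and only if for all compact `K_i ⊆ U_i` there are `W_{i,j} ∈ O` with
`K_i ⊆ ⋃_j W_{i,j}` for each `i` and, for each `j`, the sets `W_{1,j}, …, W_{n,j}`
pairwise disjoint with union contained in `V_j`. -/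
theorem stmt16 {X : Type*} [TopologicalSpace X] [T2Space X] [LocallyCompactSpace X]
    (O : Set (Set X))
    (hO_empty : (∅ : Set X) ∈ O)
    (hO_basis : IsTopologicalBasis O)
    (hO_union : ∀ U ∈ O, ∀ V ∈ O, U ∪ V ∈ O)
    (hO_inter : ∀ U ∈ O, ∀ V ∈ O, U ∩ V ∈ O)
    (n m : ℕ)
    (U : Fin n → Set X) (hU : ∀ i, U i ∈ O)
    (V : Fin m → Set X) (hV : ∀ j, V j ∈ O) :
    ((∑ i, Set.indicator (U i) (1 : X → ℕ)) ≤
        ∑ j, Set.indicator (V j) (1 : X → ℕ)) ↔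
      (∀ K : Fin n → Set X, (∀ i, IsCompact (K i)) → (∀ i, K i ⊆ U i) →
        ∃ W : Fin n → Fin m → Set X,
          (∀ i j, W i j ∈ O) ∧
          (∀ i, K i ⊆ ⋃ j, W i j) ∧
          (∀ j, ∀ i i' : Fin n, i ≠ i' → Disjoint (W i j) (W i' j)) ∧
          (∀ j, (⋃ i, W i j) ⊆ V j)) :=
  stmt16_general O hO_empty hO_basis hO_union n m U V hV
end

section
/- (Riesz's Theorem for dimension functions) Let X be a locally compact Hausdorff space and let O be a basis for the topology of X that contains the empty set and is closed under finite unions. Then the restriction map μ ↦ μ|_O is a bijection from the set of regular Borel measures on X onto the set of regular dimension functions on O; that is, every regular Borel measure on X restricts to a regular dimension function on O, two regular Borel measures agreeing on O are equal, and every regular dimension function on O extends to a regular Borel measure on X. -/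
open MeasureTheory
open scoped ENNReal

/-- A Borel measure is regular if it is outer regular (on Borel sets) and inner regular
by compact sets on open sets. -/
def IsRegularBorel {X : Type*} [TopologicalSpace X] [MeasurableSpace X]
    (μ : Measure X) : Prop :=
  (∀ E : Set X, MeasurableSet E →
    μ E = ⨅ (V : Set X) (_ : IsOpen V) (_ : E ⊆ V), μ V) ∧
  (∀ V : Set X, IsOpen V →
    μ V = ⨆ (K : Set X) (_ : IsCompact K) (_ : K ⊆ V), μ K)

/-- A regular dimension function on a family `O` of open sets: monotone, subadditive,
additive on disjoint pairs, vanishing on `∅`, and inner regular with respect to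
compact containment. -/
def IsRegularDimFun {X : Type*} [TopologicalSpace X]
    (O : Set (Set X)) (ν : Set X → ℝ≥0∞) : Prop :=
  ν ∅ = 0 ∧
  (∀ V₁ ∈ O, ∀ V₂ ∈ O, V₁ ⊆ V₂ → ν V₁ ≤ ν V₂) ∧
  (∀ V₁ ∈ O, ∀ V₂ ∈ O, ν (V₁ ∪ V₂) ≤ ν V₁ + ν V₂) ∧
  (∀ V₁ ∈ O, ∀ V₂ ∈ O, Disjoint V₁ V₂ → ν (V₁ ∪ V₂) = ν V₁ + ν V₂) ∧
  (∀ V ∈ O, ν V = ⨆ (U : Set X) (_ : U ∈ O)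
    (_ : IsCompact (closure U) ∧ closure U ⊆ V), ν U)

/-!
A regular measure loses nothing when restricted to `O`: for open `V`, inner regularity and
local compactness give `μ V = sup {μ U | U ∈ O, U ≪ V}`, so `μ` is determined on open sets by its
values on `O`, and then everywhere by outer regularity.

Conversely, a regular dimension function `ν` extends to open sets by
`λ V = sup {ν U | U ∈ O, U ≪ V}`. This `λ` is countably subadditive, because a compact closure
inside `⋃ Vₙ` is covered by finitely many members of `O` with compact closures inside the `Vₙ`.
The outer measure induced by `λ` makes open sets Carathéodory measurable, since additivity of `ν`
on disjoint pairs gives `ν U + λ (W \ closure U) ≤ λ W`; its restriction to Borel sets is the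
required measure.
-/

section DimensionFunction

open Set TopologicalSpace

variable {X : Type*} {O : Set (Set X)} {ν : Set X → ℝ≥0∞}

theorem apply_finset_sup_le_sum (hO_empty : (∅ : Set X) ∈ O)
    (hO_union : ∀ U ∈ O, ∀ V ∈ O, U ∪ V ∈ O) (hν0 : ν ∅ = 0)
    (hsub : ∀ V₁ ∈ O, ∀ V₂ ∈ O, ν (V₁ ∪ V₂) ≤ ν V₁ + ν V₂)
    {ι : Type*} (t : Finset ι) {f : ι → Set X} (hf : ∀ i ∈ t, f i ∈ O) :
    ν (t.sup f) ≤ ∑ i ∈ t, ν (f i) := by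
  classical
  induction t using Finset.induction_on with
  | empty => simp [hν0]
  | insert a s ha ih =>
    have hs : ∀ i ∈ s, f i ∈ O := fun i hi => hf i (Finset.mem_insert_of_mem hi)
    rw [Finset.sup_insert, Finset.sum_insert ha]
    calc ν (f a ∪ s.sup f) ≤ ν (f a) + ν (s.sup f) :=
          hsub _ (hf a (Finset.mem_insert_self a s)) _ (Finset.sup_mem O hO_empty hO_union s f hs)
      _ ≤ ν (f a) + ∑ i ∈ s, ν (f i) := by gcongr; exact ih hs

variable [TopologicalSpace X]

theorem exists_mem_subset_isCompact_closure_subset [T2Space X] [LocallyCompactSpace X]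
    (hO_basis : IsTopologicalBasis O) (hO_empty : (∅ : Set X) ∈ O)
    (hO_union : ∀ U ∈ O, ∀ V ∈ O, U ∪ V ∈ O)
    {K V : Set X} (hK : IsCompact K) (hV : IsOpen V) (hKV : K ⊆ V) :
    ∃ U ∈ O, K ⊆ U ∧ IsCompact (closure U) ∧ closure U ⊆ V := by
  obtain ⟨L, hL, hKL, hLV⟩ := exists_compact_between hK hV hKV
  have hcover : K ⊆ ⋃ U : {U // U ∈ O ∧ U ⊆ interior L}, U.1 := fun x hx =>
    let ⟨U, hU, hxU, hUL⟩ := hO_basis.exists_subset_of_mem_open (hKL hx) isOpen_interior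
    mem_iUnion.2 ⟨⟨U, hU, hUL⟩, hxU⟩
  obtain ⟨t, ht⟩ := hK.elim_finite_subcover _ (fun U => hO_basis.isOpen U.2.1) hcover
  have hclosure : closure (t.sup (·.1)) ⊆ L :=
    closure_minimal (Finset.sup_le fun U _ => U.2.2.trans interior_subset) hL.isClosed
  refine ⟨t.sup (·.1), Finset.sup_mem O hO_empty hO_union t _ fun U _ => U.2.1, ?_,
    hL.of_isClosed_subset isClosed_closure hclosure, hclosure.trans hLV⟩
  rwa [Finset.sup_set_eq_biUnion]

variable (O ν) in
noncomputable def innerDim (V : Set X) : ℝ≥0∞ :=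
  ⨆ (U : Set X) (_ : U ∈ O) (_ : IsCompact (closure U) ∧ closure U ⊆ V), ν U

theorem le_innerDim {U V : Set X} (hU : U ∈ O) (hUc : IsCompact (closure U))
    (hUV : closure U ⊆ V) : ν U ≤ innerDim O ν V :=
  le_iSup₂_of_le U hU (le_iSup_of_le ⟨hUc, hUV⟩ le_rfl)

theorem innerDim_le_iff {V : Set X} {B : ℝ≥0∞} :
    innerDim O ν V ≤ B ↔ ∀ U ∈ O, IsCompact (closure U) → closure U ⊆ V → ν U ≤ B := by
  simp only [innerDim, iSup_le_iff, and_imp]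

theorem innerDim_add_le_iff (hO_empty : (∅ : Set X) ∈ O) {V : Set X} {c B : ℝ≥0∞} :
    innerDim O ν V + c ≤ B ↔
      ∀ U ∈ O, IsCompact (closure U) → closure U ⊆ V → ν U + c ≤ B := by
  have hne : ∃ U, U ∈ O ∧ IsCompact (closure U) ∧ closure U ⊆ V :=
    ⟨∅, hO_empty, by simp, by simp⟩
  simp only [innerDim, iSup_and', ENNReal.biSup_add' hne, iSup_le_iff, and_imp]

theorem innerDim_mono {V W : Set X} (h : V ⊆ W) : innerDim O ν V ≤ innerDim O ν W :=
  innerDim_le_iff.2 fun _ hU hUc hUV => le_innerDim hU hUc (hUV.trans h)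

theorem innerDim_empty (hν0 : ν ∅ = 0) : innerDim O ν ∅ = 0 :=
  nonpos_iff_eq_zero.1 <| innerDim_le_iff.2 fun U _ _ hU => by
    rw [subset_empty_iff.1 (subset_closure.trans hU), hν0]

theorem innerDim_congr {ν' : Set X → ℝ≥0∞} (h : ∀ U ∈ O, ν U = ν' U) (V : Set X) :
    innerDim O ν V = innerDim O ν' V :=
  biSup_congr fun U hU => iSup_congr fun _ => h U hU

theorem innerDim_iUnion_le [T2Space X] [LocallyCompactSpace X]
    (hO_basis : IsTopologicalBasis O) (hO_empty : (∅ : Set X) ∈ O)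
    (hO_union : ∀ U ∈ O, ∀ V ∈ O, U ∪ V ∈ O) (hν0 : ν ∅ = 0)
    (hmono : ∀ V₁ ∈ O, ∀ V₂ ∈ O, V₁ ⊆ V₂ → ν V₁ ≤ ν V₂)
    (hsub : ∀ V₁ ∈ O, ∀ V₂ ∈ O, ν (V₁ ∪ V₂) ≤ ν V₁ + ν V₂)
    {f : ℕ → Set X} (hf : ∀ n, IsOpen (f n)) :
    innerDim O ν (⋃ n, f n) ≤ ∑' n, innerDim O ν (f n) := by
  refine innerDim_le_iff.2 fun U hU hUc hUf => ?_
  obtain ⟨t, ht⟩ := hUc.elim_finite_subcover f hf hUf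
  obtain ⟨K, hKc, hKf, hUK⟩ := hUc.finite_compact_cover t f (fun i _ => hf i) ht
  choose W hWO hKW hWc hWf using fun i =>
    exists_mem_subset_isCompact_closure_subset hO_basis hO_empty hO_union (hKc i) (hf i) (hKf i)
  have hUW : U ⊆ t.sup W := by
    rw [Finset.sup_set_eq_biUnion]
    exact subset_closure.trans (hUK ▸ biUnion_mono subset_rfl fun i _ => hKW i)
  have hWt : t.sup W ∈ O := Finset.sup_mem O hO_empty hO_union t W fun i _ => hWO i
  calc ν U ≤ ν (t.sup W) := hmono U hU _ hWt hUW
    _ ≤ ∑ i ∈ t, ν (W i) := apply_finset_sup_le_sum hO_empty hO_union hν0 hsub t fun i _ => hWO i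
    _ ≤ ∑ i ∈ t, innerDim O ν (f i) := by gcongr with i; exact le_innerDim (hWO i) (hWc i) (hWf i)
    _ ≤ ∑' i, innerDim O ν (f i) := ENNReal.sum_le_tsum t

theorem add_innerDim_diff_closure_le (hO_empty : (∅ : Set X) ∈ O)
    (hO_union : ∀ U ∈ O, ∀ V ∈ O, U ∪ V ∈ O)
    (hadd : ∀ V₁ ∈ O, ∀ V₂ ∈ O, Disjoint V₁ V₂ → ν (V₁ ∪ V₂) = ν V₁ + ν V₂)
    {U W : Set X} (hU : U ∈ O) (hUc : IsCompact (closure U)) (hUW : closure U ⊆ W) :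
    ν U + innerDim O ν (W \ closure U) ≤ innerDim O ν W := by
  rw [add_comm, innerDim_add_le_iff hO_empty]
  intro U' hU' hU'c hU'W
  have hdisj : Disjoint U U' := disjoint_left.2 fun x hx hx' =>
    (hU'W (subset_closure hx')).2 (subset_closure hx)
  rw [add_comm, ← hadd U hU U' hU' hdisj]
  refine le_innerDim (hO_union U hU U' hU') ?_ ?_ <;> rw [closure_union]
  exacts [hUc.union hU'c, union_subset hUW (hU'W.trans sdiff_subset)]

variable (O) in
noncomputable def dimOuterMeasure (hν0 : ν ∅ = 0) : OuterMeasure X :=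
  inducedOuterMeasure (fun V (_ : IsOpen V) => innerDim O ν V) isOpen_empty (innerDim_empty hν0)

theorem dimOuterMeasure_le_innerDim (hν0 : ν ∅ = 0) {S V : Set X} (hV : IsOpen V) (hSV : S ⊆ V) :
    dimOuterMeasure O hν0 S ≤ innerDim O ν V :=
  (measure_mono hSV).trans (le_inducedOuterMeasure.1 le_rfl V hV)

theorem dimOuterMeasure_eq_iInf [T2Space X] [LocallyCompactSpace X]
    (hO_basis : IsTopologicalBasis O) (hO_empty : (∅ : Set X) ∈ O)
    (hO_union : ∀ U ∈ O, ∀ V ∈ O, U ∪ V ∈ O) (hν0 : ν ∅ = 0)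
    (hmono : ∀ V₁ ∈ O, ∀ V₂ ∈ O, V₁ ⊆ V₂ → ν V₁ ≤ ν V₂)
    (hsub : ∀ V₁ ∈ O, ∀ V₂ ∈ O, ν (V₁ ∪ V₂) ≤ ν V₁ + ν V₂) (A : Set X) :
    dimOuterMeasure O hν0 A = ⨅ (V : Set X) (_ : IsOpen V) (_ : A ⊆ V), innerDim O ν V :=
  inducedOuterMeasure_eq_iInf (fun _ => isOpen_iUnion)
    (fun _ hf => innerDim_iUnion_le hO_basis hO_empty hO_union hν0 hmono hsub hf)
    (fun _ _ _ _ => innerDim_mono) A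

theorem dimOuterMeasure_of_isOpen [T2Space X] [LocallyCompactSpace X]
    (hO_basis : IsTopologicalBasis O) (hO_empty : (∅ : Set X) ∈ O)
    (hO_union : ∀ U ∈ O, ∀ V ∈ O, U ∪ V ∈ O) (hν0 : ν ∅ = 0)
    (hmono : ∀ V₁ ∈ O, ∀ V₂ ∈ O, V₁ ⊆ V₂ → ν V₁ ≤ ν V₂)
    (hsub : ∀ V₁ ∈ O, ∀ V₂ ∈ O, ν (V₁ ∪ V₂) ≤ ν V₁ + ν V₂) {V : Set X} (hV : IsOpen V) :
    dimOuterMeasure O hν0 V = innerDim O ν V := by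
  rw [dimOuterMeasure_eq_iInf hO_basis hO_empty hO_union hν0 hmono hsub]
  exact le_antisymm (iInf₂_le_of_le V hV (iInf_le _ subset_rfl))
    (le_iInf₂ fun W _ => le_iInf fun hVW => innerDim_mono hVW)

theorem borel_le_caratheodory_dimOuterMeasure [T2Space X] [LocallyCompactSpace X]
    (hO_basis : IsTopologicalBasis O) (hO_empty : (∅ : Set X) ∈ O)
    (hO_union : ∀ U ∈ O, ∀ V ∈ O, U ∪ V ∈ O) (hν0 : ν ∅ = 0)
    (hmono : ∀ V₁ ∈ O, ∀ V₂ ∈ O, V₁ ⊆ V₂ → ν V₁ ≤ ν V₂)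
    (hsub : ∀ V₁ ∈ O, ∀ V₂ ∈ O, ν (V₁ ∪ V₂) ≤ ν V₁ + ν V₂)
    (hadd : ∀ V₁ ∈ O, ∀ V₂ ∈ O, Disjoint V₁ V₂ → ν (V₁ ∪ V₂) = ν V₁ + ν V₂) :
    borel X ≤ (dimOuterMeasure O hν0).caratheodory := by
  refine MeasurableSpace.generateFrom_le fun V hV => ?_
  set m := dimOuterMeasure O hν0
  refine m.isCaratheodory_iff_le.2 fun A => ?_
  rw [dimOuterMeasure_eq_iInf hO_basis hO_empty hO_union hν0 hmono hsub A]
  refine le_iInf₂ fun W hW => le_iInf fun hAW => ?_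
  calc m (A ∩ V) + m (A \ V) ≤ innerDim O ν (W ∩ V) + m (A \ V) := by
        gcongr
        exact dimOuterMeasure_le_innerDim hν0 (hW.inter hV) (inter_subset_inter_left V hAW)
    _ ≤ innerDim O ν W := by
        refine (innerDim_add_le_iff hO_empty).2 fun U hU hUc hUWV => ?_
        have hAV : A \ V ⊆ W \ closure U := fun x hx => ⟨hAW hx.1, fun hxU => hx.2 (hUWV hxU).2⟩
        calc ν U + m (A \ V) ≤ ν U + innerDim O ν (W \ closure U) := by
              gcongr
              exact dimOuterMeasure_le_innerDim hν0 (hW.sdiff isClosed_closure) hAV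
          _ ≤ innerDim O ν W := add_innerDim_diff_closure_le hO_empty hO_union hadd hU hUc
              (hUWV.trans inter_subset_left)

theorem IsRegularBorel.measure_eq_innerDim [T2Space X] [LocallyCompactSpace X]
    [MeasurableSpace X] (hO_basis : IsTopologicalBasis O) (hO_empty : (∅ : Set X) ∈ O)
    (hO_union : ∀ U ∈ O, ∀ V ∈ O, U ∪ V ∈ O) {μ : Measure X} (hμ : IsRegularBorel μ)
    {V : Set X} (hV : IsOpen V) : μ V = innerDim O (fun U => μ U) V := by
  refine le_antisymm ?_ (innerDim_le_iff.2 fun U _ _ hUV => measure_mono (subset_closure.trans hUV))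
  rw [hμ.2 V hV]
  refine iSup₂_le fun K hK => iSup_le fun hKV => ?_
  obtain ⟨U, hU, hKU, hUc, hUV⟩ :=
    exists_mem_subset_isCompact_closure_subset hO_basis hO_empty hO_union hK hV hKV
  exact (measure_mono hKU).trans (le_innerDim hU hUc hUV)

theorem IsRegularBorel.isRegularDimFun [T2Space X] [LocallyCompactSpace X]
    [MeasurableSpace X] [BorelSpace X] (hO_basis : IsTopologicalBasis O)
    (hO_empty : (∅ : Set X) ∈ O) (hO_union : ∀ U ∈ O, ∀ V ∈ O, U ∪ V ∈ O)
    {μ : Measure X} (hμ : IsRegularBorel μ) : IsRegularDimFun O (fun V => μ V) :=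
  ⟨measure_empty, fun _ _ _ _ h => measure_mono h, fun _ _ _ _ => measure_union_le _ _,
    fun _ _ _ h₂ hd => measure_union hd (hO_basis.isOpen h₂).measurableSet,
    fun _ hV => hμ.measure_eq_innerDim hO_basis hO_empty hO_union (hO_basis.isOpen hV)⟩

theorem IsRegularBorel.ext [T2Space X] [LocallyCompactSpace X] [MeasurableSpace X]
    (hO_basis : IsTopologicalBasis O) (hO_empty : (∅ : Set X) ∈ O)
    (hO_union : ∀ U ∈ O, ∀ V ∈ O, U ∪ V ∈ O) {μ₁ μ₂ : Measure X}
    (h₁ : IsRegularBorel μ₁) (h₂ : IsRegularBorel μ₂) (h : ∀ V ∈ O, μ₁ V = μ₂ V) : μ₁ = μ₂ := by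
  have hopen : ∀ V, IsOpen V → μ₁ V = μ₂ V := fun V hV => by
    rw [h₁.measure_eq_innerDim hO_basis hO_empty hO_union hV,
      h₂.measure_eq_innerDim hO_basis hO_empty hO_union hV, innerDim_congr h]
  ext E hE
  rw [h₁.1 E hE, h₂.1 E hE]
  exact biInf_congr fun V hV => iInf_congr fun _ => hopen V hV

theorem IsRegularDimFun.exists_isRegularBorel [T2Space X] [LocallyCompactSpace X]
    [MeasurableSpace X] [BorelSpace X] (hO_basis : IsTopologicalBasis O)
    (hO_empty : (∅ : Set X) ∈ O) (hO_union : ∀ U ∈ O, ∀ V ∈ O, U ∪ V ∈ O)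
    (hν : IsRegularDimFun O ν) : ∃ μ : Measure X, IsRegularBorel μ ∧ ∀ V ∈ O, μ V = ν V := by
  obtain ⟨hν0, hmono, hsub, hadd, hreg⟩ := hν
  set m := dimOuterMeasure O hν0
  have hm : ‹MeasurableSpace X› ≤ m.caratheodory := BorelSpace.measurable_eq.le.trans
    (borel_le_caratheodory_dimOuterMeasure hO_basis hO_empty hO_union hν0 hmono hsub hadd)
  set μ := m.toMeasure hm
  have hμ_eq_iInf : ∀ E, MeasurableSet E →
      μ E = ⨅ (V : Set X) (_ : IsOpen V) (_ : E ⊆ V), innerDim O ν V := fun E hE =>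
    (toMeasure_apply m hm hE).trans
      (dimOuterMeasure_eq_iInf hO_basis hO_empty hO_union hν0 hmono hsub E)
  have hμ_open : ∀ V, IsOpen V → μ V = innerDim O ν V := fun V hV =>
    (toMeasure_apply m hm hV.measurableSet).trans
      (dimOuterMeasure_of_isOpen hO_basis hO_empty hO_union hν0 hmono hsub hV)
  refine ⟨μ, ⟨fun E hE => ?_, fun V hV => ?_⟩,
    fun V hV => (hμ_open V (hO_basis.isOpen hV)).trans (hreg V hV).symm⟩
  · rw [hμ_eq_iInf E hE]
    exact biInf_congr fun V hV => iInf_congr fun _ => (hμ_open V hV).symm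
  · refine le_antisymm ?_ (iSup₂_le fun K _ => iSup_le fun hKV => measure_mono hKV)
    rw [hμ_open V hV]
    refine innerDim_le_iff.2 fun U hU hUc hUV => ?_
    have hU_closure : ν U ≤ μ (closure U) := by
      rw [hμ_eq_iInf _ isClosed_closure.measurableSet]
      exact le_iInf₂ fun W _ => le_iInf fun hUW => le_innerDim hU hUc hUW
    exact hU_closure.trans (le_iSup₂_of_le (closure U) hUc (le_iSup_of_le hUV le_rfl))

end DimensionFunction

theorem stmt19_general {X : Type*} [TopologicalSpace X] [T2Space X] [LocallyCompactSpace X]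
    [MeasurableSpace X] [BorelSpace X]
    (O : Set (Set X))
    (hO_empty : (∅ : Set X) ∈ O)
    (hO_basis : TopologicalSpace.IsTopologicalBasis O)
    (hO_union : ∀ U ∈ O, ∀ V ∈ O, U ∪ V ∈ O) :
    (∀ μ : Measure X, IsRegularBorel μ →
      IsRegularDimFun O (fun V : Set X => μ V)) ∧
    (∀ μ₁ μ₂ : Measure X, IsRegularBorel μ₁ → IsRegularBorel μ₂ →
      (∀ V ∈ O, μ₁ V = μ₂ V) → μ₁ = μ₂) ∧
    (∀ ν : Set X → ℝ≥0∞, IsRegularDimFun O ν →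
      ∃ μ : Measure X, IsRegularBorel μ ∧ ∀ V ∈ O, μ V = ν V) :=
  ⟨fun _ hμ => hμ.isRegularDimFun hO_basis hO_empty hO_union,
    fun _ _ h₁ h₂ h => h₁.ext hO_basis hO_empty hO_union h₂ h,
    fun _ hν => hν.exists_isRegularBorel hO_basis hO_empty hO_union⟩

/-- Riesz's Theorem for dimension functions: on a locally compact Hausdorff space, with
`O` a basis containing `∅` and closed under finite unions, restriction is a bijection
between regular Borel measures on `X` and regular dimension functions on `O`. -/
theorem stmt19 {X : Type*} [TopologicalSpace X] [T2Space X] [LocallyCompactSpace X]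
    [MeasurableSpace X] [BorelSpace X]
    (O : Set (Set X))
    (hO_open : ∀ U ∈ O, IsOpen U)
    (hO_empty : (∅ : Set X) ∈ O)
    (hO_basis : TopologicalSpace.IsTopologicalBasis O)
    (hO_union : ∀ U ∈ O, ∀ V ∈ O, U ∪ V ∈ O) :
    (∀ μ : Measure X, IsRegularBorel μ →
      IsRegularDimFun O (fun V : Set X => μ V)) ∧
    (∀ μ₁ μ₂ : Measure X, IsRegularBorel μ₁ → IsRegularBorel μ₂ →
      (∀ V ∈ O, μ₁ V = μ₂ V) → μ₁ = μ₂) ∧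
    (∀ ν : Set X → ℝ≥0∞, IsRegularDimFun O ν →
      ∃ μ : Measure X, IsRegularBorel μ ∧ ∀ V ∈ O, μ V = ν V) :=
  stmt19_general O hO_empty hO_basis hO_union
end
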